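/- arXiv:2004.12717 — 5 statements merged into one kernel-verified Lean document; each statement's English description precedes it below -/
import Mathlib

section
/- Let {H; E; D} be a quantized domain and T ∈ C*_E(D). Then T, as a densely defined operator on H with domain D, satisfies D ⊆ dom(T*) (Hilbert space adjoint), T*(H_ℓ) ⊆ H_ℓ for all ℓ ∈ Ω, and the restriction T* := T*|_D belongs to C*_E(D). Consequently C*_E(D) is a unital *-algebra. -/
/-!
Each `Hℓ` is a closed subspace of `D` that reduces `T`, and `T` is bounded on it, so the
compression `T|_{Hℓ}` is a bounded operator on the Hilbert space `Hℓ` with an ordinary adjoint.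
Since `T` maps `D ∩ Hℓ^⊥` into `Hℓ^⊥`, that adjoint already represents `T†` against all of `D`:
for `x ∈ D` and `y ∈ Hℓ` one has `⟪T x, y⟫ = ⟪T (P x), y⟫` with `P` the projection onto `Hℓ`.
Hence `Hℓ ⊆ dom T†`, and `T†` maps `Hℓ` boundedly into `Hℓ`. Invariance of `Hℓ^⊥ ∩ D` under `T†`
follows from the invariance of `Hℓ` under `T`.
-/

open LinearPMap Submodule

section ReducingSubspace

variable {𝕜 H : Type*} [RCLike 𝕜] [NormedAddCommGroup H] [InnerProductSpace 𝕜 H]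
  {T : H →ₗ.[𝕜] H} {K : Submodule 𝕜 H}

local notation "⟪" x ", " y "⟫" => inner 𝕜 x y

theorem inner_apply_eq_inner_apply_starProjection [K.HasOrthogonalProjection]
    (hKT : K ≤ T.domain) (hperp : ∀ x : T.domain, (x : H) ∈ Kᗮ → T x ∈ Kᗮ)
    {y : H} (hy : y ∈ K) (x : T.domain) :
    ⟪y, T x⟫ = ⟪y, T ⟨K.starProjection x, hKT (K.starProjection_apply_mem x)⟩⟫ := by
  set p : T.domain := ⟨K.starProjection x, hKT (K.starProjection_apply_mem x)⟩
  have hq : ((x - p : T.domain) : H) ∈ Kᗮ := K.sub_starProjection_mem_orthogonal x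
  have h : ⟪y, T (x - p)⟫ = 0 := inner_right_of_mem_orthogonal hy (hperp _ hq)
  rwa [LinearPMap.map_sub, inner_sub_right, sub_eq_zero] at h

theorem exists_mem_inner_eq_inner_apply [CompleteSpace K] (hKT : K ≤ T.domain)
    (hinv : ∀ x : T.domain, (x : H) ∈ K → T x ∈ K)
    (hperp : ∀ x : T.domain, (x : H) ∈ Kᗮ → T x ∈ Kᗮ) {C : ℝ} (hC : 0 ≤ C)
    (hbdd : ∀ x : T.domain, (x : H) ∈ K → ‖T x‖ ≤ C * ‖(x : H)‖) (y : K) :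
    ∃ w ∈ K, ‖w‖ ≤ C * ‖y‖ ∧ ∀ x : T.domain, ⟪w, x⟫ = ⟪(y : H), T x⟫ := by
  let TK : K →L[𝕜] K :=
    ((T.toFun.comp (inclusion hKT)).codRestrict K fun k => hinv _ k.2).mkContinuous C
      fun k => hbdd _ k.2
  refine ⟨ContinuousLinearMap.adjoint TK y, (ContinuousLinearMap.adjoint TK y).2, ?_, fun x => ?_⟩
  · calc ‖ContinuousLinearMap.adjoint TK y‖ ≤ ‖ContinuousLinearMap.adjoint TK‖ * ‖y‖ :=
          (ContinuousLinearMap.adjoint TK).le_opNorm y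
      _ = ‖TK‖ * ‖y‖ := by rw [LinearIsometryEquiv.norm_map]
      _ ≤ C * ‖y‖ := by gcongr; exact LinearMap.mkContinuous_norm_le _ hC _
  · calc ⟪(ContinuousLinearMap.adjoint TK y : H), x⟫
        = ⟪ContinuousLinearMap.adjoint TK y, K.orthogonalProjectionOnto x⟫ :=
          (inner_orthogonalProjectionOnto_eq_of_mem_left _ _).symm
      _ = ⟪y, TK (K.orthogonalProjectionOnto x)⟫ := ContinuousLinearMap.adjoint_inner_left _ _ _
      _ = ⟪(y : H), T x⟫ := (inner_apply_eq_inner_apply_starProjection hKT hperp y.2 x).symm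

theorem le_adjoint_domain [CompleteSpace H] [CompleteSpace K] (hKT : K ≤ T.domain)
    (hinv : ∀ x : T.domain, (x : H) ∈ K → T x ∈ K)
    (hperp : ∀ x : T.domain, (x : H) ∈ Kᗮ → T x ∈ Kᗮ)
    (hbdd : ∃ C, 0 ≤ C ∧ ∀ x : T.domain, (x : H) ∈ K → ‖T x‖ ≤ C * ‖(x : H)‖) :
    K ≤ T†.domain := fun y hy => by
  obtain ⟨C, hC, hbdd⟩ := hbdd
  obtain ⟨w, -, -, hw⟩ := exists_mem_inner_eq_inner_apply hKT hinv hperp hC hbdd ⟨y, hy⟩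
  exact mem_adjoint_domain_of_exists y ⟨w, hw⟩

theorem adjoint_apply_mem_and_norm_le [CompleteSpace H] [CompleteSpace K]
    (hT : Dense (T.domain : Set H)) (hKT : K ≤ T.domain)
    (hinv : ∀ x : T.domain, (x : H) ∈ K → T x ∈ K)
    (hperp : ∀ x : T.domain, (x : H) ∈ Kᗮ → T x ∈ Kᗮ) {C : ℝ} (hC : 0 ≤ C)
    (hbdd : ∀ x : T.domain, (x : H) ∈ K → ‖T x‖ ≤ C * ‖(x : H)‖)
    (y : T†.domain) (hy : (y : H) ∈ K) :
    T† y ∈ K ∧ ‖T† y‖ ≤ C * ‖(y : H)‖ := by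
  obtain ⟨w, hwK, hwC, hw⟩ := exists_mem_inner_eq_inner_apply hKT hinv hperp hC hbdd ⟨y, hy⟩
  rw [adjoint_apply_eq hT y hw]
  exact ⟨hwK, hwC⟩

theorem adjoint_apply_mem_orthogonal [CompleteSpace H] (hT : Dense (T.domain : Set H))
    (hKT : K ≤ T.domain) (hinv : ∀ x : T.domain, (x : H) ∈ K → T x ∈ K)
    (y : T†.domain) (hy : (y : H) ∈ Kᗮ) : T† y ∈ Kᗮ := by
  refine (mem_orthogonal _ _).2 fun k hk => ?_
  rw [← (adjoint_isFormalAdjoint hT).symm ⟨k, hKT hk⟩ y]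
  exact inner_right_of_mem_orthogonal (hinv _ hk) hy

end ReducingSubspace

theorem stmt4_general
    {Ω : Type*}
    {H : Type*} [NormedAddCommGroup H] [InnerProductSpace ℂ H] [CompleteSpace H]
    (E : Ω → Submodule ℂ H)
    (hclosed : ∀ ℓ, IsClosed (E ℓ : Set H))
    (hdense : Dense (⋃ ℓ, (E ℓ : Set H)))
    (Dsub : Submodule ℂ H)
    (hD : ∀ x : H, x ∈ Dsub ↔ ∃ ℓ, x ∈ E ℓ)
    (T : Dsub →ₗ[ℂ] H)
    -- `T ∈ C*_E(D)`:
    (hTinv : ∀ ℓ (d : Dsub), (d : H) ∈ E ℓ → T d ∈ E ℓ)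
    (hTbdd : ∀ ℓ, ∃ C : ℝ, 0 ≤ C ∧ ∀ d : Dsub, (d : H) ∈ E ℓ → ‖T d‖ ≤ C * ‖(d : H)‖)
    (hTperp : ∀ ℓ (d : Dsub), (d : H) ∈ (E ℓ)ᗮ → T d ∈ (E ℓ)ᗮ) :
    ∃ S : Dsub →ₗ[ℂ] H,
      -- `S` is the restriction to `D` of the Hilbert space adjoint of `T`
      -- (in particular every `ξ ∈ D` lies in `dom T†`):
      (∀ d d' : Dsub, (inner ℂ (T d) ((d' : H)) : ℂ) = inner ℂ ((d : H)) (S d')) ∧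
      -- `T†(Hℓ) ⊆ Hℓ` and `S = T†|_D ∈ C*_E(D)`:
      (∀ d : Dsub, S d ∈ Dsub) ∧
      (∀ ℓ (d : Dsub), (d : H) ∈ E ℓ → S d ∈ E ℓ) ∧
      (∀ ℓ, ∃ C : ℝ, 0 ≤ C ∧ ∀ d : Dsub, (d : H) ∈ E ℓ → ‖S d‖ ≤ C * ‖(d : H)‖) ∧
      (∀ ℓ (d : Dsub), (d : H) ∈ (E ℓ)ᗮ → S d ∈ (E ℓ)ᗮ) := by
  let T' : H →ₗ.[ℂ] H := ⟨Dsub, T⟩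
  have hle : ∀ ℓ, E ℓ ≤ T'.domain := fun ℓ x hx => (hD x).2 ⟨ℓ, hx⟩
  have hcomplete : ∀ ℓ, CompleteSpace (E ℓ) := fun ℓ => (hclosed ℓ).completeSpace_coe
  have hDdense : Dense (T'.domain : Set H) := by
    convert hdense
    ext x
    simp [T', hD]
  have hDadj : Dsub ≤ T'†.domain := fun x hx => by
    obtain ⟨ℓ, hxℓ⟩ := (hD x).1 hx
    exact le_adjoint_domain (hle ℓ) (hTinv ℓ) (hTperp ℓ) (hTbdd ℓ) hxℓ
  have hS : ∀ ℓ, ∃ C, 0 ≤ C ∧ ∀ d : Dsub, (d : H) ∈ E ℓ →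
      T'† (inclusion hDadj d) ∈ E ℓ ∧ ‖T'† (inclusion hDadj d)‖ ≤ C * ‖(d : H)‖ := fun ℓ => by
    obtain ⟨C, hC, hbdd⟩ := hTbdd ℓ
    exact ⟨C, hC, fun d => adjoint_apply_mem_and_norm_le hDdense (hle ℓ) (hTinv ℓ) (hTperp ℓ)
      hC hbdd (inclusion hDadj d)⟩
  have hSinv : ∀ ℓ (d : Dsub), (d : H) ∈ E ℓ → T'† (inclusion hDadj d) ∈ E ℓ := fun ℓ d hd => by
    obtain ⟨_, -, hSC⟩ := hS ℓ
    exact (hSC d hd).1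
  refine ⟨T'†.toFun ∘ₗ inclusion hDadj, fun d d' => ?_, fun d => ?_, hSinv, fun ℓ => ?_,
    fun ℓ d hd => ?_⟩
  · exact (adjoint_isFormalAdjoint hDdense).symm d (inclusion hDadj d')
  · obtain ⟨ℓ, hdℓ⟩ := (hD d).1 d.2
    exact hle ℓ (hSinv ℓ d hdℓ)
  · obtain ⟨C, hC, hSC⟩ := hS ℓ
    exact ⟨C, hC, fun d hd => (hSC d hd).2⟩
  · exact adjoint_apply_mem_orthogonal hDdense (hle ℓ) (hTinv ℓ) (inclusion hDadj d) hd

/-- If `T ∈ C*_E(D)`, then the union space `D` is contained in the domain of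
the Hilbert-space adjoint of `T`; the adjoint leaves every `Hℓ` invariant and its
restriction `T* := T†|_D` again belongs to `C*_E(D)` (so `C*_E(D)` is a unital
*-algebra). -/
theorem stmt4
    {Ω : Type*} [Preorder Ω] [IsDirected Ω (· ≤ ·)] [Nonempty Ω]
    {H : Type*} [NormedAddCommGroup H] [InnerProductSpace ℂ H] [CompleteSpace H]
    (E : Ω → Submodule ℂ H)
    (hclosed : ∀ ℓ, IsClosed (E ℓ : Set H))
    (hmono : Monotone E)
    (hdense : Dense (⋃ ℓ, (E ℓ : Set H)))
    (Dsub : Submodule ℂ H)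
    (hD : ∀ x : H, x ∈ Dsub ↔ ∃ ℓ, x ∈ E ℓ)
    (T : Dsub →ₗ[ℂ] H)
    -- `T ∈ C*_E(D)`:
    (hTD : ∀ d : Dsub, T d ∈ Dsub)
    (hTinv : ∀ ℓ (d : Dsub), (d : H) ∈ E ℓ → T d ∈ E ℓ)
    (hTbdd : ∀ ℓ, ∃ C : ℝ, 0 ≤ C ∧ ∀ d : Dsub, (d : H) ∈ E ℓ → ‖T d‖ ≤ C * ‖(d : H)‖)
    (hTperp : ∀ ℓ (d : Dsub), (d : H) ∈ (E ℓ)ᗮ → T d ∈ (E ℓ)ᗮ) :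
    ∃ S : Dsub →ₗ[ℂ] H,
      -- `S` is the restriction to `D` of the Hilbert space adjoint of `T`
      -- (in particular every `ξ ∈ D` lies in `dom T†`):
      (∀ d d' : Dsub, (inner ℂ (T d) ((d' : H)) : ℂ) = inner ℂ ((d : H)) (S d')) ∧
      -- `T†(Hℓ) ⊆ Hℓ` and `S = T†|_D ∈ C*_E(D)`:
      (∀ d : Dsub, S d ∈ Dsub) ∧
      (∀ ℓ (d : Dsub), (d : H) ∈ E ℓ → S d ∈ E ℓ) ∧
      (∀ ℓ, ∃ C : ℝ, 0 ≤ C ∧ ∀ d : Dsub, (d : H) ∈ E ℓ → ‖S d‖ ≤ C * ‖(d : H)‖) ∧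
      (∀ ℓ (d : Dsub), (d : H) ∈ (E ℓ)ᗮ → S d ∈ (E ℓ)ᗮ) :=
  stmt4_general E hclosed hdense Dsub hD T hTinv hTbdd hTperp
end

section
/- Let φ ∈ CPCC_loc(A, C*_E(D)) with Stinespring representation (π_φ, V_φ, {H^φ; E^φ; D^φ}). Define H̃^φ_ℓ := closed linear span of π_φ(A) V_φ H_ℓ, D̃^φ := ⋃_ℓ H̃^φ_ℓ, H̃^φ := closure of D̃^φ, π̃_φ(a) := π_φ(a)|_{D̃^φ}, Ṽ_φ := V_φ. Then (π̃_φ, Ṽ_φ, {H̃^φ; Ẽ^φ; D̃^φ}) is a minimal Stinespring representation of φ: each H̃^φ_ℓ is invariant under π_φ(A), π̃_φ is a unital *-homomorphism into C*_{Ẽ^φ}(D̃^φ), φ(a) ⊆ Ṽ_φ* π̃_φ(a) Ṽ_φ, and H̃^φ = closed linear span of π̃_φ(A) Ṽ_φ D. -/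
/-- The candidate minimal subspaces `H̃φℓ := [πφ(A) Vφ Hℓ]`. -/
noncomputable def minSp {Ω : Type*} {H : Type*} [NormedAddCommGroup H]
    [InnerProductSpace ℂ H] {Hp : Type*} [NormedAddCommGroup Hp]
    [InnerProductSpace ℂ Hp] {A : Type*}
    (E : Ω → Submodule ℂ H) (Dp : Submodule ℂ Hp)
    (π : A → (Dp →ₗ[ℂ] Hp)) (V : H →L[ℂ] Hp) (ℓ : Ω) : Submodule ℂ Hp :=
  (Submodule.span ℂ
    {y : Hp | ∃ (a : A) (h : H), h ∈ E ℓ ∧ ∃ hm : V h ∈ Dp, y = π a ⟨V h, hm⟩}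
  ).topologicalClosure

/-!
The generating set `πφ(A) Vφ Hℓ` of `H̃φℓ` is invariant under `πφ(A)` because `πφ` is
multiplicative, so its span is invariant as well; invariance passes to the closure because
`πφ(a)` is bounded on `Hφℓ ⊇ H̃φℓ`. Since `πφ(1) = 1`, `H̃φℓ` contains `Vφ Hℓ`. Finally the
family `ℓ ↦ H̃φℓ` is directed, so the closure of its union is the closed span of the union of
the generating sets, which is `πφ(A) Vφ D` because `D = ⋃ Hℓ`.
-/

theorem Submodule.apply_mem_span_of_apply_mem {R M : Type*} [Semiring R] [AddCommMonoid M]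
    [Module R M] {D : Submodule R M} (T : D →ₗ[R] M) {s : Set M} (hsD : s ⊆ D)
    (hT : ∀ d : D, (d : M) ∈ s → T d ∈ span R s) (d : D) (hd : (d : M) ∈ span R s) :
    T d ∈ span R s := by
  suffices ∀ x ∈ span R s, ∀ hx : x ∈ D, T ⟨x, hx⟩ ∈ span R s from this d hd d.2
  intro x hx
  induction hx using Submodule.span_induction with
  | mem x hx => exact fun hxD => hT ⟨x, hxD⟩ hx
  | zero =>
    intro _
    rw [show (⟨0, _⟩ : D) = 0 from rfl, map_zero]
    exact zero_mem _
  | add x y hx hy ihx ihy =>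
    intro _
    have hxD := span_le.2 hsD hx
    have hyD := span_le.2 hsD hy
    rw [show (⟨x + y, _⟩ : D) = ⟨x, hxD⟩ + ⟨y, hyD⟩ from rfl, map_add]
    exact add_mem (ihx hxD) (ihy hyD)
  | smul c x hx ih =>
    intro _
    have hxD := span_le.2 hsD hx
    rw [show (⟨c • x, _⟩ : D) = c • ⟨x, hxD⟩ from rfl, map_smul]
    exact smul_mem _ c (ih hxD)

theorem Submodule.apply_mem_topologicalClosure {𝕜 E : Type*} [NormedField 𝕜]
    [SeminormedAddCommGroup E] [NormedSpace 𝕜 E] {D : Submodule 𝕜 E} (T : D →ₗ[𝕜] E)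
    {M : Submodule 𝕜 E} (hMD : M ≤ D) (hT : ∀ d : D, (d : E) ∈ M → T d ∈ M) {C : ℝ}
    (hC : ∀ d : D, (d : E) ∈ M.topologicalClosure → ‖T d‖ ≤ C * ‖(d : E)‖)
    (d : D) (hd : (d : E) ∈ M.topologicalClosure) : T d ∈ M.topologicalClosure := by
  obtain ⟨u, huM, hu⟩ := mem_closure_iff_seq_limit.mp (show (d : E) ∈ closure (M : Set E) from hd)
  let v : ℕ → D := fun n => ⟨u n, hMD (huM n)⟩
  have hdist : ∀ n, ‖T (v n) - T d‖ ≤ C * ‖u n - (d : E)‖ := fun n => by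
    rw [← map_sub]
    exact hC _ (sub_mem (M.le_topologicalClosure (huM n)) hd)
  have hlim : Filter.Tendsto (fun n => T (v n)) Filter.atTop (nhds (T d)) := by
    rw [tendsto_iff_norm_sub_tendsto_zero]
    have := (tendsto_iff_norm_sub_tendsto_zero.mp hu).const_mul C
    rw [mul_zero] at this
    exact squeeze_zero (fun n => norm_nonneg _) hdist this
  exact M.isClosed_topologicalClosure.mem_of_tendsto hlim
    (Filter.Eventually.of_forall fun n => M.le_topologicalClosure (hT (v n) (huM n)))

theorem Submodule.closure_iUnion_topologicalClosure_span {R M : Type*} [Semiring R]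
    [AddCommMonoid M] [Module R M] [TopologicalSpace M] [ContinuousAdd M]
    [ContinuousConstSMul R M] {ι : Type*} [Nonempty ι] {s : ι → Set M}
    (hs : Directed (· ⊆ ·) s) :
    closure (⋃ i, ((span R (s i)).topologicalClosure : Set M))
      = (span R (⋃ i, s i)).topologicalClosure := by
  have hdir : Directed (· ≤ ·) fun i => span R (s i) :=
    hs.mono_comp (g := span R) _ fun _ _ => span_mono
  have hclosure : closure (⋃ i, ((span R (s i)).topologicalClosure : Set M))
      = closure (⋃ i, (span R (s i) : Set M)) := by
    simp only [topologicalClosure_coe]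
    refine subset_antisymm ?_ (closure_mono (Set.iUnion_mono fun i => subset_closure))
    exact closure_minimal (Set.iUnion_subset fun i =>
      closure_mono (Set.subset_iUnion (fun i => (span R (s i) : Set M)) i)) isClosed_closure
  rw [hclosure, ← coe_iSup_of_directed _ hdir, ← span_iUnion, topologicalClosure_coe]

section DilationOrbit

variable {R H Hp A : Type*} [Semiring R] [AddCommMonoid Hp] [Module R Hp] {Dp : Submodule R Hp}
  (π : A → (Dp →ₗ[R] Hp)) (V : H → Hp)

def dilationOrbit (s : Set H) : Set Hp :=
  {y : Hp | ∃ (a : A) (h : H), h ∈ s ∧ ∃ hm : V h ∈ Dp, y = π a ⟨V h, hm⟩}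

theorem dilationOrbit_mono : Monotone (dilationOrbit π V) := by
  rintro s t hst _ ⟨a, h, hs, hm, rfl⟩
  exact ⟨a, h, hst hs, hm, rfl⟩

theorem dilationOrbit_iUnion {ι : Type*} (s : ι → Set H) :
    dilationOrbit π V (⋃ i, s i) = ⋃ i, dilationOrbit π V (s i) := by
  ext y
  simp only [dilationOrbit, Set.mem_iUnion, Set.mem_ofPred_eq]
  constructor
  · rintro ⟨a, h, ⟨i, hi⟩, hm, rfl⟩
    exact ⟨i, a, h, hi, hm, rfl⟩
  · rintro ⟨i, a, h, hi, hm, rfl⟩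
    exact ⟨a, h, ⟨i, hi⟩, hm, rfl⟩

theorem dilationOrbit_subset (hπD : ∀ a (d : Dp), π a d ∈ Dp) (s : Set H) :
    dilationOrbit π V s ⊆ Dp := by
  rintro _ ⟨a, h, -, hm, rfl⟩
  exact hπD a _

theorem dilationOrbit_subset_of_invariant {K : Set Hp}
    (hπK : ∀ a (d : Dp), (d : Hp) ∈ K → π a d ∈ K) {s : Set H} (hVs : ∀ h ∈ s, V h ∈ K) :
    dilationOrbit π V s ⊆ K := by
  rintro _ ⟨a, h, hs, hm, rfl⟩
  exact hπK a ⟨V h, hm⟩ (hVs h hs)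

theorem apply_mem_dilationOrbit [Mul A] (hπD : ∀ a (d : Dp), π a d ∈ Dp)
    (hπmul : ∀ a b (d : Dp), π (a * b) d = π a ⟨π b d, hπD b d⟩) {s : Set H} (a : A) (d : Dp)
    (hd : (d : Hp) ∈ dilationOrbit π V s) : π a d ∈ dilationOrbit π V s := by
  obtain ⟨b, h, hs, hm, hdb⟩ := hd
  obtain rfl : d = ⟨π b ⟨V h, hm⟩, hπD b _⟩ := Subtype.ext hdb
  exact ⟨a * b, h, hs, hm, (hπmul a b _).symm⟩

theorem apply_mem_span_dilationOrbit [Mul A] (hπD : ∀ a (d : Dp), π a d ∈ Dp)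
    (hπmul : ∀ a b (d : Dp), π (a * b) d = π a ⟨π b d, hπD b d⟩) {s : Set H} (a : A) (d : Dp)
    (hd : (d : Hp) ∈ Submodule.span R (dilationOrbit π V s)) :
    π a d ∈ Submodule.span R (dilationOrbit π V s) :=
  Submodule.apply_mem_span_of_apply_mem (π a) (dilationOrbit_subset π V hπD s)
    (fun d hd => Submodule.subset_span (apply_mem_dilationOrbit π V hπD hπmul a d hd)) d hd

theorem mem_dilationOrbit_of_mem [One A] (hπ1 : ∀ d : Dp, π 1 d = (d : Hp)) {s : Set H}
    {h : H} (hs : h ∈ s) (hm : V h ∈ Dp) : V h ∈ dilationOrbit π V s :=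
  ⟨1, h, hs, hm, (hπ1 ⟨V h, hm⟩).symm⟩

end DilationOrbit

theorem stmt8_general
    {Ω : Type*} [Preorder Ω] [IsDirected Ω (· ≤ ·)] [Nonempty Ω]
    {H : Type*} [NormedAddCommGroup H] [InnerProductSpace ℂ H]
    {Hp : Type*} [NormedAddCommGroup Hp] [InnerProductSpace ℂ Hp]
    {A : Type*} [Ring A]
    (E : Ω → Submodule ℂ H)
    (hEm : Monotone E)
    (Dsub : Submodule ℂ H)
    (hD : ∀ x : H, x ∈ Dsub ↔ ∃ ℓ, x ∈ E ℓ)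
    (F : Ω → Submodule ℂ Hp)
    (hFc : ∀ ℓ, IsClosed (F ℓ : Set Hp))
    (Dp : Submodule ℂ Hp)
    (hDp : ∀ x : Hp, x ∈ Dp ↔ ∃ ℓ, x ∈ F ℓ)
    (π : A → (Dp →ₗ[ℂ] Hp))
    (hπD : ∀ a (d : Dp), π a d ∈ Dp)
    (hπinv : ∀ a ℓ (d : Dp), (d : Hp) ∈ F ℓ → π a d ∈ F ℓ)
    (hπbdd : ∀ a ℓ, ∃ C : ℝ, 0 ≤ C ∧ ∀ d : Dp, (d : Hp) ∈ F ℓ → ‖π a d‖ ≤ C * ‖(d : Hp)‖)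
    (hπ1 : ∀ d : Dp, π 1 d = (d : Hp))
    (hπmul : ∀ a b (d : Dp), π (a * b) d = π a ⟨π b d, hπD b d⟩)
    (V : H →L[ℂ] Hp)
    (hVE : ∀ ℓ (x : H), x ∈ E ℓ → V x ∈ F ℓ)
    (φ : A → (Dsub →ₗ[ℂ] H))
    (hVD : ∀ d : Dsub, V (d : H) ∈ Dp)
    (hdil : ∀ a (g h : Dsub),
      (inner ℂ ((g : H)) (φ a h) : ℂ) = inner ℂ (V (g : H)) (π a ⟨V (h : H), hVD h⟩)) :
    -- `Ẽφ` is an upward filtered family of closed subspaces with `H̃φℓ ⊆ Hφℓ`: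
    Monotone (minSp E Dp π V) ∧
    (∀ ℓ, minSp E Dp π V ℓ ≤ F ℓ) ∧
    -- each `H̃φℓ` reduces every `πφ(a)`, so `π̃φ(a) := πφ(a)|_{D̃φ}` is well defined:
    (∀ a ℓ (d : Dp), (d : Hp) ∈ minSp E Dp π V ℓ → π a d ∈ minSp E Dp π V ℓ) ∧
    -- `Ṽφ = Vφ` maps `Hℓ` into `H̃φℓ`:
    (∀ ℓ (h : H), h ∈ E ℓ → V h ∈ minSp E Dp π V ℓ) ∧
    -- the restricted triple still dilates `φ`, i.e. `φ(a) ⊆ Ṽφ* π̃φ(a) Ṽφ`: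
    (∀ a (g h : Dsub),
      (inner ℂ ((g : H)) (φ a h) : ℂ) = inner ℂ (V (g : H)) (π a ⟨V (h : H), hVD h⟩)) ∧
    -- minimality: `H̃φ = [π̃φ(A) Ṽφ D]`:
    closure (⋃ ℓ, ((minSp E Dp π V ℓ : Submodule ℂ Hp) : Set Hp))
      = ((Submodule.span ℂ
          {y : Hp | ∃ (a : A) (h : H), h ∈ Dsub ∧ ∃ hm : V h ∈ Dp, y = π a ⟨V h, hm⟩}
        ).topologicalClosure : Set Hp) := by
  have hOrbitMono : Monotone fun ℓ => dilationOrbit π V (E ℓ) :=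
    (dilationOrbit_mono π V).comp fun _ _ h => SetLike.coe_mono (hEm h)
  have hspanF ℓ : Submodule.span ℂ (dilationOrbit π V (E ℓ)) ≤ F ℓ :=
    Submodule.span_le.2 (dilationOrbit_subset_of_invariant π V (hπinv · ℓ) (hVE ℓ))
  have hle ℓ : minSp E Dp π V ℓ ≤ F ℓ :=
    Submodule.topologicalClosure_minimal _ (hspanF ℓ) (hFc ℓ)
  have hDsub : (Dsub : Set H) = ⋃ ℓ, (E ℓ : Set H) := Set.ext fun x => by simpa using hD x
  refine ⟨fun _ _ h => Submodule.topologicalClosure_mono (Submodule.span_mono (hOrbitMono h)),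
    hle, fun a ℓ => ?_, fun ℓ h hh => ?_, hdil, ?_⟩
  · obtain ⟨C, -, hC⟩ := hπbdd a ℓ
    exact Submodule.apply_mem_topologicalClosure (π a)
      (Submodule.span_le.2 (dilationOrbit_subset π V hπD _))
      (apply_mem_span_dilationOrbit π V hπD hπmul a) (fun d hd => hC d (hle ℓ hd))
  · have hm : V h ∈ Dp := (hDp _).2 ⟨ℓ, hVE ℓ h hh⟩
    exact Submodule.le_topologicalClosure _
      (Submodule.subset_span (mem_dilationOrbit_of_mem π V hπ1 hh hm))
  · change _ = ((Submodule.span ℂ (dilationOrbit π V Dsub)).topologicalClosure : Set Hp)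
    rw [hDsub, dilationOrbit_iUnion]
    exact Submodule.closure_iUnion_topologicalClosure_span hOrbitMono.directed_le

/-- Any Stinespring representation of `φ ∈ CPCC_loc(A, C*_E(D))` can be cut
down to a minimal one: the subspaces `H̃φℓ = [πφ(A) Vφ Hℓ]` form an upward filtered
family of closed subspaces of the `Hφℓ`, each reducing `πφ(A)`, containing `Vφ(Hℓ)`; the
restricted representation still dilates `φ`, and `H̃φ = [π̃φ(A) Ṽφ D]`. -/
theorem stmt8
    {Ω : Type*} [Preorder Ω] [IsDirected Ω (· ≤ ·)] [Nonempty Ω]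
    {H : Type*} [NormedAddCommGroup H] [InnerProductSpace ℂ H] [CompleteSpace H]
    {Hp : Type*} [NormedAddCommGroup Hp] [InnerProductSpace ℂ Hp] [CompleteSpace Hp]
    {A : Type*} [Ring A] [StarRing A] [Algebra ℂ A]
    (E : Ω → Submodule ℂ H)
    (hEc : ∀ ℓ, IsClosed (E ℓ : Set H)) (hEm : Monotone E)
    (Dsub : Submodule ℂ H)
    (hD : ∀ x : H, x ∈ Dsub ↔ ∃ ℓ, x ∈ E ℓ)
    (hDd : Dense (Dsub : Set H))
    (F : Ω → Submodule ℂ Hp)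
    (hFc : ∀ ℓ, IsClosed (F ℓ : Set Hp)) (hFm : Monotone F)
    (Dp : Submodule ℂ Hp)
    (hDp : ∀ x : Hp, x ∈ Dp ↔ ∃ ℓ, x ∈ F ℓ)
    (hDpd : Dense (Dp : Set Hp))
    (π : A → (Dp →ₗ[ℂ] Hp))
    (hπD : ∀ a (d : Dp), π a d ∈ Dp)
    (hπinv : ∀ a ℓ (d : Dp), (d : Hp) ∈ F ℓ → π a d ∈ F ℓ)
    (hπperp : ∀ a ℓ (d : Dp), (d : Hp) ∈ (F ℓ)ᗮ → π a d ∈ (F ℓ)ᗮ)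
    (hπbdd : ∀ a ℓ, ∃ C : ℝ, 0 ≤ C ∧ ∀ d : Dp, (d : Hp) ∈ F ℓ → ‖π a d‖ ≤ C * ‖(d : Hp)‖)
    (hπ1 : ∀ d : Dp, π 1 d = (d : Hp))
    (hπmul : ∀ a b (d : Dp), π (a * b) d = π a ⟨π b d, hπD b d⟩)
    (hπadd : ∀ a b (d : Dp), π (a + b) d = π a d + π b d)
    (hπstar : ∀ a (d d' : Dp),
      (inner ℂ (π a d) ((d' : Hp)) : ℂ) = inner ℂ ((d : Hp)) (π (star a) d'))
    (V : H →L[ℂ] Hp) (hVc : ‖V‖ ≤ 1)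
    (hVE : ∀ ℓ (x : H), x ∈ E ℓ → V x ∈ F ℓ)
    (φ : A → (Dsub →ₗ[ℂ] H))
    (hVD : ∀ d : Dsub, V (d : H) ∈ Dp)
    (hdil : ∀ a (g h : Dsub),
      (inner ℂ ((g : H)) (φ a h) : ℂ) = inner ℂ (V (g : H)) (π a ⟨V (h : H), hVD h⟩)) :
    -- `Ẽφ` is an upward filtered family of closed subspaces with `H̃φℓ ⊆ Hφℓ`:
    Monotone (minSp E Dp π V) ∧
    (∀ ℓ, minSp E Dp π V ℓ ≤ F ℓ) ∧
    -- each `H̃φℓ` reduces every `πφ(a)`, so `π̃φ(a) := πφ(a)|_{D̃φ}` is well defined: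
    (∀ a ℓ (d : Dp), (d : Hp) ∈ minSp E Dp π V ℓ → π a d ∈ minSp E Dp π V ℓ) ∧
    -- `Ṽφ = Vφ` maps `Hℓ` into `H̃φℓ`:
    (∀ ℓ (h : H), h ∈ E ℓ → V h ∈ minSp E Dp π V ℓ) ∧
    -- the restricted triple still dilates `φ`, i.e. `φ(a) ⊆ Ṽφ* π̃φ(a) Ṽφ`:
    (∀ a (g h : Dsub),
      (inner ℂ ((g : H)) (φ a h) : ℂ) = inner ℂ (V (g : H)) (π a ⟨V (h : H), hVD h⟩)) ∧
    -- minimality: `H̃φ = [π̃φ(A) Ṽφ D]`: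
    closure (⋃ ℓ, ((minSp E Dp π V ℓ : Submodule ℂ Hp) : Set Hp))
      = ((Submodule.span ℂ
          {y : Hp | ∃ (a : A) (h : H), h ∈ Dsub ∧ ∃ hm : V h ∈ Dp, y = π a ⟨V h, hm⟩}
        ).topologicalClosure : Set Hp) :=
  stmt8_general E hEm Dsub hD F hFc Dp hDp π hπD hπinv hπbdd hπ1 hπmul V hVE φ hVD hdil
end

section
/- Any two minimal Stinespring representations (π̃_φ, Ṽ_φ, {H̃^φ; Ẽ^φ; D̃^φ}) and (π̂_φ, V̂_φ, {Ĥ^φ; Ê^φ; D̂^φ}) of the same map φ ∈ CPCC_loc(A, C*_E(D)) are unitarily equivalent: there exists a unitary U : H̃^φ → Ĥ^φ such that U Ṽ_φ = V̂_φ and U π̃_φ(a) = π̂_φ(a) U for all a ∈ A. -/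
open Set InnerProductSpace

section GramMatrix

variable {𝕜 ι E F : Type*} [RCLike 𝕜]
  [NormedAddCommGroup E] [InnerProductSpace 𝕜 E] [NormedAddCommGroup F] [InnerProductSpace 𝕜 F]
  {v : ι → E} {w : ι → F}

theorem inner_linearCombination_eq_of_inner_eq (h : ∀ i j, ⟪v i, v j⟫_𝕜 = ⟪w i, w j⟫_𝕜)
    (m m' : ι →₀ 𝕜) :
    ⟪Finsupp.linearCombination 𝕜 v m, Finsupp.linearCombination 𝕜 v m'⟫_𝕜 =
      ⟪Finsupp.linearCombination 𝕜 w m, Finsupp.linearCombination 𝕜 w m'⟫_𝕜 := by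
  simp [Finsupp.linearCombination_apply, Finsupp.sum_inner, Finsupp.inner_sum, inner_smul_left,
    inner_smul_right, h]

theorem norm_linearCombination_eq_of_inner_eq (h : ∀ i j, ⟪v i, v j⟫_𝕜 = ⟪w i, w j⟫_𝕜)
    (m : ι →₀ 𝕜) :
    ‖Finsupp.linearCombination 𝕜 v m‖ = ‖Finsupp.linearCombination 𝕜 w m‖ := by
  rw [@norm_eq_sqrt_re_inner 𝕜, @norm_eq_sqrt_re_inner 𝕜,
    inner_linearCombination_eq_of_inner_eq h]

theorem denseRange_linearCombination_iff :
    DenseRange (Finsupp.linearCombination 𝕜 v) ↔ Dense (Submodule.span 𝕜 (range v) : Set E) := by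
  rw [DenseRange, ← LinearMap.coe_range, Finsupp.range_linearCombination]

theorem exists_linearIsometryEquiv_of_inner_eq [CompleteSpace E] [CompleteSpace F]
    (hv : Dense (Submodule.span 𝕜 (range v) : Set E))
    (hw : Dense (Submodule.span 𝕜 (range w) : Set F))
    (h : ∀ i j, ⟪v i, v j⟫_𝕜 = ⟪w i, w j⟫_𝕜) :
    ∃ U : E ≃ₗᵢ[𝕜] F, ∀ i, U (v i) = w i := by
  have hv' := denseRange_linearCombination_iff.2 hv
  have hw' := denseRange_linearCombination_iff.2 hw
  have hnorm := fun m ↦ (norm_linearCombination_eq_of_inner_eq h m).symm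
  -- the dense maps need not be injective, so the identity of `ι →₀ 𝕜` can be extended directly
  refine ⟨(LinearEquiv.refl 𝕜 (ι →₀ 𝕜)).extendOfIsometry _ _ hv' hw' hnorm, fun i ↦ ?_⟩
  simpa using (LinearEquiv.refl 𝕜 _).extendOfIsometry_eq _ _ hv' hw' hnorm (Finsupp.single i 1)

end GramMatrix

theorem LinearMap.continuousOn_of_bound {𝕜 E F : Type*} [NormedField 𝕜]
    [SeminormedAddCommGroup E] [NormedSpace 𝕜 E] [SeminormedAddCommGroup F] [NormedSpace 𝕜 F]
    (f : E →ₗ[𝕜] F) {W : Submodule 𝕜 E} (C : ℝ) (h : ∀ x ∈ W, ‖f x‖ ≤ C * ‖x‖) :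
    ContinuousOn f W := by
  rw [continuousOn_iff_continuous_domRestrict]
  exact AddMonoidHomClass.continuous_of_bound (f ∘ₗ W.subtype) C fun x ↦ h x x.2

theorem LinearMap.exists_extend_continuousOn {𝕜 ι E F : Type*} [NontriviallyNormedField 𝕜]
    [NormedAddCommGroup E] [NormedSpace 𝕜 E] [NormedAddCommGroup F] [NormedSpace 𝕜 F]
    {D : Submodule 𝕜 E} {W : ι → Submodule 𝕜 E} (f : D →ₗ[𝕜] F) (hWD : ∀ ℓ, W ℓ ≤ D)
    (hbdd : ∀ ℓ, ∃ C : ℝ, 0 ≤ C ∧ ∀ d : D, (d : E) ∈ W ℓ → ‖f d‖ ≤ C * ‖(d : E)‖) :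
    ∃ g : E →ₗ[𝕜] F, (∀ d : D, g d = f d) ∧ ∀ ℓ, ContinuousOn g (W ℓ) := by
  obtain ⟨g, hg⟩ := LinearMap.exists_extend f
  have hgf (d : D) : g d = f d := LinearMap.congr_fun hg d
  refine ⟨g, hgf, fun ℓ ↦ ?_⟩
  obtain ⟨C, -, hC⟩ := hbdd ℓ
  exact g.continuousOn_of_bound C fun x hx ↦ hgf ⟨x, hWD ℓ hx⟩ ▸ hC ⟨x, hWD ℓ hx⟩ hx

section Stinespring

variable {Ω H K A : Type*} [NormedAddCommGroup H] [InnerProductSpace ℂ H]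
  [NormedAddCommGroup K] [InnerProductSpace ℂ K] {Dsub : Submodule ℂ H} {D : Submodule ℂ K}

def stinespringVec (π : A → (D →ₗ[ℂ] K)) (V : H →L[ℂ] K) (hVD : ∀ d : Dsub, V d ∈ D)
    (p : A × Dsub) : K :=
  π p.1 ⟨V p.2, hVD p.2⟩

def minGen (E : Ω → Submodule ℂ H) (D : Submodule ℂ K) (π : A → (D →ₗ[ℂ] K)) (V : H →L[ℂ] K)
    (ℓ : Ω) : Set K :=
  {y | ∃ (a : A) (h : H), h ∈ E ℓ ∧ ∃ hm : V h ∈ D, y = π a ⟨V h, hm⟩}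

theorem coe_minSp (E : Ω → Submodule ℂ H) (π : A → (D →ₗ[ℂ] K)) (V : H →L[ℂ] K) (ℓ : Ω) :
    (minSp E D π V ℓ : Set K) = closure (Submodule.span ℂ (minGen E D π V ℓ)) :=
  Submodule.topologicalClosure_coe _

theorem inner_stinespringVec [Mul A] [Star A] {φ : A → (Dsub →ₗ[ℂ] H)}
    {π : A → (D →ₗ[ℂ] K)} {V : H →L[ℂ] K} {hVD : ∀ d : Dsub, V d ∈ D}
    {hπD : ∀ a (d : D), π a d ∈ D}
    (hπmul : ∀ a b (d : D), π (a * b) d = π a ⟨π b d, hπD b d⟩)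
    (hπstar : ∀ a (d d' : D), ⟪π a d, (d' : K)⟫_ℂ = ⟪(d : K), π (star a) d'⟫_ℂ)
    (hdil : ∀ a (g h : Dsub), ⟪(g : H), φ a h⟫_ℂ = ⟪V g, π a ⟨V h, hVD h⟩⟫_ℂ)
    (p q : A × Dsub) :
    ⟪stinespringVec π V hVD p, stinespringVec π V hVD q⟫_ℂ =
      ⟪(p.2 : H), φ (star p.1 * q.1) q.2⟫_ℂ := by
  rw [hdil, hπmul]
  exact hπstar _ _ ⟨_, hπD _ _⟩

theorem minGen_subset_range_stinespringVec {E : Ω → Submodule ℂ H} (hE : ∀ ℓ, E ℓ ≤ Dsub)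
    (π : A → (D →ₗ[ℂ] K)) (V : H →L[ℂ] K) (hVD : ∀ d : Dsub, V d ∈ D) (ℓ : Ω) :
    minGen E D π V ℓ ⊆ range (stinespringVec π V hVD) := by
  rintro _ ⟨a, h, hh, hm, rfl⟩
  exact ⟨(a, ⟨h, hE ℓ hh⟩), rfl⟩

theorem dense_span_range_stinespringVec {E : Ω → Submodule ℂ H} (hE : ∀ ℓ, E ℓ ≤ Dsub)
    {F : Ω → Submodule ℂ K} (hDF : ∀ x ∈ D, ∃ ℓ, x ∈ F ℓ) (hDd : Dense (D : Set K))
    {π : A → (D →ₗ[ℂ] K)} {V : H →L[ℂ] K} (hVD : ∀ d : Dsub, V d ∈ D)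
    (hmin : ∀ ℓ, F ℓ = minSp E D π V ℓ) :
    Dense (Submodule.span ℂ (range (stinespringVec π V hVD)) : Set K) := by
  refine (hDd.mono fun x hx ↦ ?_).of_closure
  obtain ⟨ℓ, hxℓ⟩ := hDF x hx
  have hxℓ : x ∈ (minSp E D π V ℓ : Set K) := hmin ℓ ▸ hxℓ
  rw [coe_minSp] at hxℓ
  exact closure_mono (Submodule.span_mono (minGen_subset_range_stinespringVec hE π V hVD ℓ)) hxℓ

end Stinespring

section Intertwining

variable {Ω H K₁ K₂ A : Type*} [NormedAddCommGroup H] [InnerProductSpace ℂ H]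
  [NormedAddCommGroup K₁] [InnerProductSpace ℂ K₁] [NormedAddCommGroup K₂] [InnerProductSpace ℂ K₂]
  {E : Ω → Submodule ℂ H} {Dsub : Submodule ℂ H} {D₁ : Submodule ℂ K₁} {D₂ : Submodule ℂ K₂}
  {π₁ : A → (D₁ →ₗ[ℂ] K₁)} {π₂ : A → (D₂ →ₗ[ℂ] K₂)} {V₁ : H →L[ℂ] K₁} {V₂ : H →L[ℂ] K₂}
  {hV₁D : ∀ d : Dsub, V₁ d ∈ D₁} {hV₂D : ∀ d : Dsub, V₂ d ∈ D₂}

theorem mapsTo_minSp (hE : ∀ ℓ, E ℓ ≤ Dsub) (U : K₁ →L[ℂ] K₂)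
    (hU : ∀ p, U (stinespringVec π₁ V₁ hV₁D p) = stinespringVec π₂ V₂ hV₂D p) (ℓ : Ω) :
    MapsTo U (minSp E D₁ π₁ V₁ ℓ) (minSp E D₂ π₂ V₂ ℓ) := by
  rw [coe_minSp, coe_minSp]
  refine MapsTo.closure (fun x hx ↦ ?_) U.continuous
  refine (Submodule.map_span_le (U : K₁ →ₗ[ℂ] K₂) _ _).2 ?_ (Submodule.mem_map_of_mem hx)
  rintro _ ⟨a, h, hh, -, rfl⟩
  exact Submodule.subset_span ⟨a, h, hh, hV₂D ⟨h, hE ℓ hh⟩, hU (a, ⟨h, hE ℓ hh⟩)⟩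

theorem map_apply_eq_apply_map_of_stinespringVec [Mul A] (hE : ∀ ℓ, E ℓ ≤ Dsub)
    {F₁ : Ω → Submodule ℂ K₁} {F₂ : Ω → Submodule ℂ K₂}
    (hD₁ : ∀ x : K₁, x ∈ D₁ ↔ ∃ ℓ, x ∈ F₁ ℓ) (hF₂D : ∀ ℓ, F₂ ℓ ≤ D₂)
    {hπ₁D : ∀ a (d : D₁), π₁ a d ∈ D₁} {hπ₂D : ∀ a (d : D₂), π₂ a d ∈ D₂}
    (hπ₁mul : ∀ a b (d : D₁), π₁ (a * b) d = π₁ a ⟨π₁ b d, hπ₁D b d⟩)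
    (hπ₂mul : ∀ a b (d : D₂), π₂ (a * b) d = π₂ a ⟨π₂ b d, hπ₂D b d⟩)
    (hmin₁ : ∀ ℓ, F₁ ℓ = minSp E D₁ π₁ V₁ ℓ) (hmin₂ : ∀ ℓ, F₂ ℓ = minSp E D₂ π₂ V₂ ℓ)
    (a : A)
    (hπ₁bdd : ∀ ℓ, ∃ C : ℝ, 0 ≤ C ∧ ∀ d : D₁, (d : K₁) ∈ F₁ ℓ → ‖π₁ a d‖ ≤ C * ‖(d : K₁)‖)
    (hπ₂bdd : ∀ ℓ, ∃ C : ℝ, 0 ≤ C ∧ ∀ d : D₂, (d : K₂) ∈ F₂ ℓ → ‖π₂ a d‖ ≤ C * ‖(d : K₂)‖)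
    (U : K₁ →L[ℂ] K₂)
    (hU : ∀ p, U (stinespringVec π₁ V₁ hV₁D p) = stinespringVec π₂ V₂ hV₂D p)
    (d : D₁) (d' : D₂) (hd : (d' : K₂) = U d) :
    U (π₁ a d) = π₂ a d' := by
  obtain ⟨ℓ, hdℓ⟩ := (hD₁ d).1 d.2
  obtain ⟨ρ₁, hρ₁, hρ₁c⟩ :=
    (π₁ a).exists_extend_continuousOn (fun ℓ x hx ↦ (hD₁ x).2 ⟨ℓ, hx⟩) hπ₁bdd
  obtain ⟨ρ₂, hρ₂, hρ₂c⟩ := (π₂ a).exists_extend_continuousOn hF₂D hπ₂bdd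
  have hUF : MapsTo U (F₁ ℓ) (F₂ ℓ) := by
    simpa only [hmin₁, hmin₂] using mapsTo_minSp hE U hU ℓ
  have hF₁_closure : (F₁ ℓ : Set K₁) = closure (Submodule.span ℂ (minGen E D₁ π₁ V₁ ℓ)) := by
    rw [hmin₁, coe_minSp]
  -- on the generators `π₁ b (V₁ h)`, both sides equal `π₂ (a * b) (V₂ h)`
  have hgen : EqOn (U ∘ₗ ρ₁) (ρ₂ ∘ₗ (U : K₁ →ₗ[ℂ] K₂)) (minGen E D₁ π₁ V₁ ℓ) := by
    rintro _ ⟨b, h, hh, hm, rfl⟩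
    have hU₁ := hU (a * b, ⟨h, hE ℓ hh⟩)
    have hU₂ := hU (b, ⟨h, hE ℓ hh⟩)
    simp only [stinespringVec] at hU₁ hU₂
    simp only [LinearMap.comp_apply, ContinuousLinearMap.coe_coe]
    rw [hρ₁ ⟨_, hπ₁D b _⟩, ← hπ₁mul, hU₁, hU₂, hρ₂ ⟨_, hπ₂D b _⟩, hπ₂mul]
  have hF₁eq : EqOn (U ∘ ρ₁) (ρ₂ ∘ U) (F₁ ℓ) :=
    (LinearMap.eqOn_span' hgen).of_subset_closure (U.continuous.comp_continuousOn (hρ₁c ℓ))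
      ((hρ₂c ℓ).comp U.continuous.continuousOn hUF) (hF₁_closure ▸ subset_closure) hF₁_closure.le
  calc U (π₁ a d) = U (ρ₁ d) := by rw [hρ₁]
    _ = ρ₂ (U d) := hF₁eq hdℓ
    _ = π₂ a d' := by rw [← hd, hρ₂]

end Intertwining

theorem stmt9_general
    {Ω : Type*}
    {H : Type*} [NormedAddCommGroup H] [InnerProductSpace ℂ H]
    {H1 : Type*} [NormedAddCommGroup H1] [InnerProductSpace ℂ H1] [CompleteSpace H1]
    {H2 : Type*} [NormedAddCommGroup H2] [InnerProductSpace ℂ H2] [CompleteSpace H2]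
    {A : Type*} [Ring A] [StarRing A]
    (E : Ω → Submodule ℂ H)
    (Dsub : Submodule ℂ H)
    (hD : ∀ x : H, x ∈ Dsub ↔ ∃ ℓ, x ∈ E ℓ)
    (hDd : Dense (Dsub : Set H))
    (φ : A → (Dsub →ₗ[ℂ] H))
    -- the first minimal Stinespring representation:
    (F1 : Ω → Submodule ℂ H1)
    (D1 : Submodule ℂ H1)
    (hD1 : ∀ x : H1, x ∈ D1 ↔ ∃ ℓ, x ∈ F1 ℓ)
    (hD1d : Dense (D1 : Set H1))
    (π1 : A → (D1 →ₗ[ℂ] H1))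
    (hπ1D : ∀ a (d : D1), π1 a d ∈ D1)
    (hπ1bdd : ∀ a ℓ, ∃ C : ℝ, 0 ≤ C ∧ ∀ d : D1, (d : H1) ∈ F1 ℓ → ‖π1 a d‖ ≤ C * ‖(d : H1)‖)
    (hπ1one : ∀ d : D1, π1 1 d = (d : H1))
    (hπ1mul : ∀ a b (d : D1), π1 (a * b) d = π1 a ⟨π1 b d, hπ1D b d⟩)
    (hπ1star : ∀ a (d d' : D1),
      (inner ℂ (π1 a d) ((d' : H1)) : ℂ) = inner ℂ ((d : H1)) (π1 (star a) d'))
    (V1 : H →L[ℂ] H1)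
    (hV1D : ∀ d : Dsub, V1 (d : H) ∈ D1)
    (hdil1 : ∀ a (g h : Dsub),
      (inner ℂ ((g : H)) (φ a h) : ℂ) = inner ℂ (V1 (g : H)) (π1 a ⟨V1 (h : H), hV1D h⟩))
    (hmin1 : ∀ ℓ, F1 ℓ = minSp E D1 π1 V1 ℓ)
    -- the second minimal Stinespring representation:
    (F2 : Ω → Submodule ℂ H2)
    (D2 : Submodule ℂ H2)
    (hD2 : ∀ x : H2, x ∈ D2 ↔ ∃ ℓ, x ∈ F2 ℓ)
    (hD2d : Dense (D2 : Set H2))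
    (π2 : A → (D2 →ₗ[ℂ] H2))
    (hπ2D : ∀ a (d : D2), π2 a d ∈ D2)
    (hπ2bdd : ∀ a ℓ, ∃ C : ℝ, 0 ≤ C ∧ ∀ d : D2, (d : H2) ∈ F2 ℓ → ‖π2 a d‖ ≤ C * ‖(d : H2)‖)
    (hπ2one : ∀ d : D2, π2 1 d = (d : H2))
    (hπ2mul : ∀ a b (d : D2), π2 (a * b) d = π2 a ⟨π2 b d, hπ2D b d⟩)
    (hπ2star : ∀ a (d d' : D2),
      (inner ℂ (π2 a d) ((d' : H2)) : ℂ) = inner ℂ ((d : H2)) (π2 (star a) d'))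
    (V2 : H →L[ℂ] H2)
    (hV2D : ∀ d : Dsub, V2 (d : H) ∈ D2)
    (hdil2 : ∀ a (g h : Dsub),
      (inner ℂ ((g : H)) (φ a h) : ℂ) = inner ℂ (V2 (g : H)) (π2 a ⟨V2 (h : H), hV2D h⟩))
    (hmin2 : ∀ ℓ, F2 ℓ = minSp E D2 π2 V2 ℓ) :
    ∃ U : H1 ≃ₗᵢ[ℂ] H2,
      (∀ x : H, U (V1 x) = V2 x) ∧
      (∀ a (d : D1) (d' : D2), (d' : H2) = U ((d : H1)) → U (π1 a d) = π2 a d') := by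
  have hE : ∀ ℓ, E ℓ ≤ Dsub := fun ℓ x hx ↦ (hD x).2 ⟨ℓ, hx⟩
  have hgram : ∀ p q, ⟪stinespringVec π1 V1 hV1D p, stinespringVec π1 V1 hV1D q⟫_ℂ =
      ⟪stinespringVec π2 V2 hV2D p, stinespringVec π2 V2 hV2D q⟫_ℂ := fun p q ↦ by
    rw [inner_stinespringVec hπ1mul hπ1star hdil1, inner_stinespringVec hπ2mul hπ2star hdil2]
  obtain ⟨U, hU⟩ := exists_linearIsometryEquiv_of_inner_eq
    (dense_span_range_stinespringVec hE (fun x hx ↦ (hD1 x).1 hx) hD1d hV1D hmin1)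
    (dense_span_range_stinespringVec hE (fun x hx ↦ (hD2 x).1 hx) hD2d hV2D hmin2) hgram
  have hUV : ∀ x : Dsub, U (V1 x) = V2 x := fun x ↦ by
    simpa [stinespringVec, hπ1one, hπ2one] using hU (1, x)
  refine ⟨U, congrFun (Continuous.ext_on hDd (by fun_prop) V2.continuous fun x hx ↦ hUV ⟨x, hx⟩),
    fun a d d' hd ↦ ?_⟩
  exact map_apply_eq_apply_map_of_stinespringVec hE hD1 (fun ℓ x hx ↦ (hD2 x).2 ⟨ℓ, hx⟩)
    hπ1mul hπ2mul hmin1 hmin2 a (hπ1bdd a) (hπ2bdd a) (U.toContinuousLinearEquiv : H1 →L[ℂ] H2)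
    hU d d' hd

/-- Any two minimal Stinespring representations of the same map
`φ ∈ CPCC_loc(A, C*_E(D))` are unitarily equivalent: there is a unitary
`U : H̃φ → Ĥφ` with `U Ṽφ = V̂φ` and `U π̃φ(a) = π̂φ(a) U` for all `a`. -/
theorem stmt9
    {Ω : Type*} [Preorder Ω] [IsDirected Ω (· ≤ ·)] [Nonempty Ω]
    {H : Type*} [NormedAddCommGroup H] [InnerProductSpace ℂ H] [CompleteSpace H]
    {H1 : Type*} [NormedAddCommGroup H1] [InnerProductSpace ℂ H1] [CompleteSpace H1]
    {H2 : Type*} [NormedAddCommGroup H2] [InnerProductSpace ℂ H2] [CompleteSpace H2]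
    {A : Type*} [Ring A] [StarRing A] [Algebra ℂ A]
    (E : Ω → Submodule ℂ H)
    (hEc : ∀ ℓ, IsClosed (E ℓ : Set H)) (hEm : Monotone E)
    (Dsub : Submodule ℂ H)
    (hD : ∀ x : H, x ∈ Dsub ↔ ∃ ℓ, x ∈ E ℓ)
    (hDd : Dense (Dsub : Set H))
    (φ : A → (Dsub →ₗ[ℂ] H))
    -- the first minimal Stinespring representation:
    (F1 : Ω → Submodule ℂ H1)
    (hF1c : ∀ ℓ, IsClosed (F1 ℓ : Set H1)) (hF1m : Monotone F1)
    (D1 : Submodule ℂ H1)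
    (hD1 : ∀ x : H1, x ∈ D1 ↔ ∃ ℓ, x ∈ F1 ℓ)
    (hD1d : Dense (D1 : Set H1))
    (π1 : A → (D1 →ₗ[ℂ] H1))
    (hπ1D : ∀ a (d : D1), π1 a d ∈ D1)
    (hπ1inv : ∀ a ℓ (d : D1), (d : H1) ∈ F1 ℓ → π1 a d ∈ F1 ℓ)
    (hπ1perp : ∀ a ℓ (d : D1), (d : H1) ∈ (F1 ℓ)ᗮ → π1 a d ∈ (F1 ℓ)ᗮ)
    (hπ1bdd : ∀ a ℓ, ∃ C : ℝ, 0 ≤ C ∧ ∀ d : D1, (d : H1) ∈ F1 ℓ → ‖π1 a d‖ ≤ C * ‖(d : H1)‖)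
    (hπ1one : ∀ d : D1, π1 1 d = (d : H1))
    (hπ1mul : ∀ a b (d : D1), π1 (a * b) d = π1 a ⟨π1 b d, hπ1D b d⟩)
    (hπ1add : ∀ a b (d : D1), π1 (a + b) d = π1 a d + π1 b d)
    (hπ1star : ∀ a (d d' : D1),
      (inner ℂ (π1 a d) ((d' : H1)) : ℂ) = inner ℂ ((d : H1)) (π1 (star a) d'))
    (V1 : H →L[ℂ] H1) (hV1c : ‖V1‖ ≤ 1)
    (hV1E : ∀ ℓ (x : H), x ∈ E ℓ → V1 x ∈ F1 ℓ)
    (hV1D : ∀ d : Dsub, V1 (d : H) ∈ D1)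
    (hdil1 : ∀ a (g h : Dsub),
      (inner ℂ ((g : H)) (φ a h) : ℂ) = inner ℂ (V1 (g : H)) (π1 a ⟨V1 (h : H), hV1D h⟩))
    (hmin1 : ∀ ℓ, F1 ℓ = minSp E D1 π1 V1 ℓ)
    -- the second minimal Stinespring representation:
    (F2 : Ω → Submodule ℂ H2)
    (hF2c : ∀ ℓ, IsClosed (F2 ℓ : Set H2)) (hF2m : Monotone F2)
    (D2 : Submodule ℂ H2)
    (hD2 : ∀ x : H2, x ∈ D2 ↔ ∃ ℓ, x ∈ F2 ℓ)
    (hD2d : Dense (D2 : Set H2))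
    (π2 : A → (D2 →ₗ[ℂ] H2))
    (hπ2D : ∀ a (d : D2), π2 a d ∈ D2)
    (hπ2inv : ∀ a ℓ (d : D2), (d : H2) ∈ F2 ℓ → π2 a d ∈ F2 ℓ)
    (hπ2perp : ∀ a ℓ (d : D2), (d : H2) ∈ (F2 ℓ)ᗮ → π2 a d ∈ (F2 ℓ)ᗮ)
    (hπ2bdd : ∀ a ℓ, ∃ C : ℝ, 0 ≤ C ∧ ∀ d : D2, (d : H2) ∈ F2 ℓ → ‖π2 a d‖ ≤ C * ‖(d : H2)‖)
    (hπ2one : ∀ d : D2, π2 1 d = (d : H2))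
    (hπ2mul : ∀ a b (d : D2), π2 (a * b) d = π2 a ⟨π2 b d, hπ2D b d⟩)
    (hπ2add : ∀ a b (d : D2), π2 (a + b) d = π2 a d + π2 b d)
    (hπ2star : ∀ a (d d' : D2),
      (inner ℂ (π2 a d) ((d' : H2)) : ℂ) = inner ℂ ((d : H2)) (π2 (star a) d'))
    (V2 : H →L[ℂ] H2) (hV2c : ‖V2‖ ≤ 1)
    (hV2E : ∀ ℓ (x : H), x ∈ E ℓ → V2 x ∈ F2 ℓ)
    (hV2D : ∀ d : Dsub, V2 (d : H) ∈ D2)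
    (hdil2 : ∀ a (g h : Dsub),
      (inner ℂ ((g : H)) (φ a h) : ℂ) = inner ℂ (V2 (g : H)) (π2 a ⟨V2 (h : H), hV2D h⟩))
    (hmin2 : ∀ ℓ, F2 ℓ = minSp E D2 π2 V2 ℓ) :
    ∃ U : H1 ≃ₗᵢ[ℂ] H2,
      (∀ x : H, U (V1 x) = V2 x) ∧
      (∀ a (d : D1) (d' : D2), (d' : H2) = U ((d : H1)) → U (π1 a d) = π2 a d') :=
  stmt9_general E Dsub hD hDd φ F1 D1 hD1 hD1d π1 hπ1D hπ1bdd hπ1one hπ1mul hπ1star V1 hV1D hdil1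
    hmin1 F2 D2 hD2 hD2d π2 hπ2D hπ2bdd hπ2one hπ2mul hπ2star V2 hV2D hdil2 hmin2
end

section
/- Let (π_φ, V_φ, {H^φ; E^φ; D^φ}) be a minimal Stinespring representation of φ, and T ∈ π_φ(A)' ∩ C*_{E^φ}(D^φ). If V_φ* T π_φ(a) V_φ|_D = 0 for all a ∈ A, then T = 0. -/
open scoped ComplexOrder

/-- Local (α-)positivity of a matrix over a locally C*-algebra: `M = B*B + Y` with
`p α (Y i j) = 0`. -/
def MatLocPos {Λ A : Type*} [Ring A] [StarRing A]
    (p : Λ → A → ℝ) (α : Λ) {n : ℕ} (M : Matrix (Fin n) (Fin n) A) : Prop :=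
  ∃ B Y : Matrix (Fin n) (Fin n) A, M = star B * B + Y ∧ ∀ i j, p α (Y i j) = 0

/-- `ψ : A → C*_E(D)` is a (linear) local completely positive and local completely
contractive map. -/
def LocCPCC {Λ Ω A H : Type*} [Ring A] [StarRing A] [Algebra ℂ A]
    [NormedAddCommGroup H] [InnerProductSpace ℂ H]
    (p : Λ → A → ℝ) (E : Ω → Submodule ℂ H) (Dsub : Submodule ℂ H)
    (ψ : A → (Dsub →ₗ[ℂ] H)) : Prop :=
  -- linearity
  (∀ a b : A, ψ (a + b) = ψ a + ψ b) ∧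
  (∀ (c : ℂ) (a : A), ψ (c • a) = c • ψ a) ∧
  -- values in `C*_E(D)`
  (∀ (a : A) (ℓ : Ω) (d : Dsub), (d : H) ∈ E ℓ → ψ a d ∈ E ℓ) ∧
  (∀ (a : A) (ℓ : Ω) (d : Dsub), (d : H) ∈ (E ℓ)ᗮ → ψ a d ∈ (E ℓ)ᗮ) ∧
  -- local complete positivity
  (∀ ℓ : Ω, ∃ α : Λ, ∀ (n : ℕ) (M : Matrix (Fin n) (Fin n) A), MatLocPos p α M →
    ∀ v : Fin n → Dsub, (∀ i, ((v i : H)) ∈ E ℓ) →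
      0 ≤ ∑ i, ∑ j, (inner ℂ ((v i : H)) (ψ (M i j) (v j)) : ℂ)) ∧
  -- local complete contractivity
  (∀ ℓ : Ω, ∃ α : Λ, ∀ (n : ℕ) (M : Matrix (Fin n) (Fin n) A) (C : ℝ), 0 ≤ C →
    MatLocPos p α (((C : ℂ) ^ 2) • (1 : Matrix (Fin n) (Fin n) A) - star M * M) →
    ∀ v : Fin n → Dsub, (∀ i, ((v i : H)) ∈ E ℓ) →
      ∑ i, ‖∑ j, ψ (M i j) (v j)‖ ^ 2 ≤ C ^ 2 * ∑ j, ‖((v j : H))‖ ^ 2)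

/-! For generators `y = π a (V h)` and `s = π b (V h')` of the minimal subspaces, the commutation
of `T` with `π` gives `⟪s, T y⟫ = ⟪h', V* T π(b* a) V h⟫ = 0`. Thus `T y ∈ F ℓ` is orthogonal to
`F ℓ`, so `T y = 0`; by continuity `T` vanishes on every `F ℓ`, hence on the dense domain `Dp`. -/

open scoped InnerProductSpace

theorem eq_zero_of_mem_closure_span_of_inner_eq_zero {𝕜 E : Type*} [RCLike 𝕜]
    [NormedAddCommGroup E] [InnerProductSpace 𝕜 E] {S : Set E} {x : E}
    (hx : x ∈ (Submodule.span 𝕜 S).topologicalClosure) (horth : ∀ s ∈ S, ⟪s, x⟫_𝕜 = 0) :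
    x = 0 := by
  have hspan : Submodule.span 𝕜 S ≤ (𝕜 ∙ x)ᗮ := Submodule.span_le.2 fun s hs =>
    Submodule.mem_orthogonal_singleton_iff_inner_left.2 (horth s hs)
  have hxx := Submodule.topologicalClosure_minimal _ hspan (Submodule.isClosed_orthogonal _) hx
  exact inner_self_eq_zero.1 (Submodule.mem_orthogonal_singleton_iff_inner_left.1 hxx)

section MinimalStinespring

variable {Ω H Hp A : Type*} [NormedAddCommGroup H] [InnerProductSpace ℂ H]
  [NormedAddCommGroup Hp] [InnerProductSpace ℂ Hp]
  {E : Ω → Submodule ℂ H} {Dsub : Submodule ℂ H} {Dp : Submodule ℂ Hp}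
  {π : A → (Dp →ₗ[ℂ] Hp)} {V : H →L[ℂ] Hp}

def minSpGen (E : Ω → Submodule ℂ H) (Dp : Submodule ℂ Hp) (π : A → (Dp →ₗ[ℂ] Hp))
    (V : H →L[ℂ] Hp) (ℓ : Ω) : Set Hp :=
  {y : Hp | ∃ (a : A) (h : H), h ∈ E ℓ ∧ ∃ hm : V h ∈ Dp, y = π a ⟨V h, hm⟩}

theorem minSp_eq_topologicalClosure_span (ℓ : Ω) :
    minSp E Dp π V ℓ = (Submodule.span ℂ (minSpGen E Dp π V ℓ)).topologicalClosure :=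
  rfl

variable [Ring A] [StarRing A]

theorem inner_apply_apply_eq_inner_apply_star_mul (T : Hp → Hp)
    (hπD : ∀ a (d : Dp), π a d ∈ Dp)
    (hπmul : ∀ a b (d : Dp), π (a * b) d = π a ⟨π b d, hπD b d⟩)
    (hπstar : ∀ a (d d' : Dp), ⟪π a d, (d' : Hp)⟫_ℂ = ⟪(d : Hp), π (star a) d'⟫_ℂ)
    (hTcomm : ∀ a (d d' : Dp), (d' : Hp) = T d → T (π a d) = π a d')
    (a b : A) (x y : Dp) (hTx : T x ∈ Dp) :
    ⟪π b y, T (π a x)⟫_ℂ = ⟪(y : Hp), T (π (star b * a) x)⟫_ℂ := by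
  let Tx : Dp := ⟨T x, hTx⟩
  calc ⟪π b y, T (π a x)⟫_ℂ
      = ⟪π b y, π a Tx⟫_ℂ := by rw [hTcomm a x Tx rfl]
    _ = ⟪(y : Hp), π (star b * a) Tx⟫_ℂ := by rw [hπstar b y ⟨_, hπD a Tx⟩, hπmul]
    _ = ⟪(y : Hp), T (π (star b * a) x)⟫_ℂ := by rw [hTcomm _ x Tx rfl]

variable [CompleteSpace H] [CompleteSpace Hp]

theorem inner_apply_eq_zero_of_mem_minSpGen (T : Hp →L[ℂ] Hp)
    (hED : ∀ ℓ, E ℓ ≤ Dsub) (hTD : ∀ x ∈ Dp, T x ∈ Dp)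
    (hπD : ∀ a (d : Dp), π a d ∈ Dp)
    (hπmul : ∀ a b (d : Dp), π (a * b) d = π a ⟨π b d, hπD b d⟩)
    (hπstar : ∀ a (d d' : Dp), ⟪π a d, (d' : Hp)⟫_ℂ = ⟪(d : Hp), π (star a) d'⟫_ℂ)
    (hTcomm : ∀ a (d d' : Dp), (d' : Hp) = T d → T (π a d) = π a d')
    (hVD : ∀ d : Dsub, V (d : H) ∈ Dp)
    (hzero : ∀ a (d : Dsub),
      (ContinuousLinearMap.adjoint V) (T (π a ⟨V (d : H), hVD d⟩)) = 0)
    {ℓ ℓ' : Ω} {s y : Hp} (hs : s ∈ minSpGen E Dp π V ℓ') (hy : y ∈ minSpGen E Dp π V ℓ) :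
    ⟪s, T y⟫_ℂ = 0 := by
  obtain ⟨b, h', -, hm', rfl⟩ := hs
  obtain ⟨a, h, hh, hm, rfl⟩ := hy
  rw [inner_apply_apply_eq_inner_apply_star_mul T hπD hπmul hπstar hTcomm a b _ _ (hTD _ hm),
    ← ContinuousLinearMap.adjoint_inner_right]
  simpa using congrArg (⟪h', ·⟫_ℂ) (hzero (star b * a) ⟨h, hED ℓ hh⟩)

theorem eqOn_zero_minSp (T : Hp →L[ℂ] Hp)
    (hED : ∀ ℓ, E ℓ ≤ Dsub) (hTD : ∀ x ∈ Dp, T x ∈ Dp)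
    (hπD : ∀ a (d : Dp), π a d ∈ Dp)
    (hπmul : ∀ a b (d : Dp), π (a * b) d = π a ⟨π b d, hπD b d⟩)
    (hπstar : ∀ a (d d' : Dp), ⟪π a d, (d' : Hp)⟫_ℂ = ⟪(d : Hp), π (star a) d'⟫_ℂ)
    (hTcomm : ∀ a (d d' : Dp), (d' : Hp) = T d → T (π a d) = π a d')
    (hVD : ∀ d : Dsub, V (d : H) ∈ Dp)
    (hzero : ∀ a (d : Dsub),
      (ContinuousLinearMap.adjoint V) (T (π a ⟨V (d : H), hVD d⟩)) = 0)
    {ℓ : Ω} (hTinv : ∀ x ∈ minSp E Dp π V ℓ, T x ∈ minSp E Dp π V ℓ) :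
    Set.EqOn T 0 (minSp E Dp π V ℓ) := by
  have hgen : Set.EqOn T 0 (minSpGen E Dp π V ℓ) := fun y hy =>
    eq_zero_of_mem_closure_span_of_inner_eq_zero
      (hTinv y (Submodule.le_topologicalClosure _ (Submodule.subset_span hy))) fun s hs =>
        inner_apply_eq_zero_of_mem_minSpGen T hED hTD hπD hπmul hπstar hTcomm hVD hzero hs hy
  rw [minSp_eq_topologicalClosure_span, Submodule.topologicalClosure_coe]
  exact T.eqOn_closure_span (g := 0) hgen

end MinimalStinespring

theorem stmt12_general
    {Ω : Type*}
    {H : Type*} [NormedAddCommGroup H] [InnerProductSpace ℂ H] [CompleteSpace H]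
    {Hp : Type*} [NormedAddCommGroup Hp] [InnerProductSpace ℂ Hp] [CompleteSpace Hp]
    {A : Type*} [Ring A] [StarRing A]
    (E : Ω → Submodule ℂ H)
    (Dsub : Submodule ℂ H)
    (hD : ∀ x : H, x ∈ Dsub ↔ ∃ ℓ, x ∈ E ℓ)
    (F : Ω → Submodule ℂ Hp)
    (Dp : Submodule ℂ Hp)
    (hDp : ∀ x : Hp, x ∈ Dp ↔ ∃ ℓ, x ∈ F ℓ)
    (hDpd : Dense (Dp : Set Hp))
    (π : A → (Dp →ₗ[ℂ] Hp))
    (hπD : ∀ a (d : Dp), π a d ∈ Dp)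
    (hπmul : ∀ a b (d : Dp), π (a * b) d = π a ⟨π b d, hπD b d⟩)
    (hπstar : ∀ a (d d' : Dp),
      (inner ℂ (π a d) ((d' : Hp)) : ℂ) = inner ℂ ((d : Hp)) (π (star a) d'))
    (V : H →L[ℂ] Hp)
    (hVD : ∀ d : Dsub, V (d : H) ∈ Dp)
    (hmin : ∀ ℓ, F ℓ = minSp E Dp π V ℓ)
    (T : Hp →L[ℂ] Hp)
    (hTinv : ∀ ℓ (x : Hp), x ∈ F ℓ → T x ∈ F ℓ)
    (hTcomm : ∀ a (d d' : Dp), (d' : Hp) = T ((d : Hp)) → T (π a d) = π a d')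
    (hzero : ∀ a (d : Dsub),
      (ContinuousLinearMap.adjoint V) (T (π a ⟨V (d : H), hVD d⟩)) = 0) :
    T = 0 := by
  have hTD : ∀ x ∈ Dp, T x ∈ Dp := fun x hx =>
    let ⟨ℓ, hℓ⟩ := (hDp x).1 hx
    (hDp _).2 ⟨ℓ, hTinv ℓ x hℓ⟩
  have hED : ∀ ℓ, E ℓ ≤ Dsub := fun ℓ h hh => (hD h).2 ⟨ℓ, hh⟩
  refine ContinuousLinearMap.ext_on (s := Dp) (by rwa [Submodule.span_eq]) fun x hx => ?_
  obtain ⟨ℓ, hℓ⟩ := (hDp x).1 hx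
  rw [hmin] at hℓ
  refine eqOn_zero_minSp T hED hTD hπD hπmul hπstar hTcomm hVD hzero (fun y hy => ?_) hℓ
  rw [← hmin] at hy ⊢
  exact hTinv ℓ y hy

/-- For a minimal Stinespring representation of `φ` and
`T ∈ πφ(A)' ∩ C*_{Eφ}(Dφ)`, if `Vφ* T πφ(a) Vφ|_D = 0` for all `a ∈ A`, then `T = 0`. -/
theorem stmt12
    {Ω : Type*} [Preorder Ω] [IsDirected Ω (· ≤ ·)] [Nonempty Ω]
    {Λ : Type*} [Preorder Λ] [IsDirected Λ (· ≤ ·)]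
    {H : Type*} [NormedAddCommGroup H] [InnerProductSpace ℂ H] [CompleteSpace H]
    {Hp : Type*} [NormedAddCommGroup Hp] [InnerProductSpace ℂ Hp] [CompleteSpace Hp]
    {A : Type*} [Ring A] [StarRing A] [Algebra ℂ A]
    (p : Λ → A → ℝ)
    (E : Ω → Submodule ℂ H)
    (hEc : ∀ ℓ, IsClosed (E ℓ : Set H)) (hEm : Monotone E)
    (Dsub : Submodule ℂ H)
    (hD : ∀ x : H, x ∈ Dsub ↔ ∃ ℓ, x ∈ E ℓ)
    (hDd : Dense (Dsub : Set H))
    (F : Ω → Submodule ℂ Hp)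
    (hFc : ∀ ℓ, IsClosed (F ℓ : Set Hp)) (hFm : Monotone F)
    (Dp : Submodule ℂ Hp)
    (hDp : ∀ x : Hp, x ∈ Dp ↔ ∃ ℓ, x ∈ F ℓ)
    (hDpd : Dense (Dp : Set Hp))
    (π : A → (Dp →ₗ[ℂ] Hp))
    (hπD : ∀ a (d : Dp), π a d ∈ Dp)
    (hπinv : ∀ a ℓ (d : Dp), (d : Hp) ∈ F ℓ → π a d ∈ F ℓ)
    (hπperp : ∀ a ℓ (d : Dp), (d : Hp) ∈ (F ℓ)ᗮ → π a d ∈ (F ℓ)ᗮ)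
    (hπbdd : ∀ a ℓ, ∃ C : ℝ, 0 ≤ C ∧ ∀ d : Dp, (d : Hp) ∈ F ℓ → ‖π a d‖ ≤ C * ‖(d : Hp)‖)
    (hπ1 : ∀ d : Dp, π 1 d = (d : Hp))
    (hπmul : ∀ a b (d : Dp), π (a * b) d = π a ⟨π b d, hπD b d⟩)
    (hπadd : ∀ a b (d : Dp), π (a + b) d = π a d + π b d)
    (hπstar : ∀ a (d d' : Dp),
      (inner ℂ (π a d) ((d' : Hp)) : ℂ) = inner ℂ ((d : Hp)) (π (star a) d'))
    (V : H →L[ℂ] Hp) (hVc : ‖V‖ ≤ 1)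
    (hVE : ∀ ℓ (x : H), x ∈ E ℓ → V x ∈ F ℓ)
    (hVD : ∀ d : Dsub, V (d : H) ∈ Dp)
    (φ : A → (Dsub →ₗ[ℂ] H))
    (hφ : LocCPCC p E Dsub φ)
    (hdil : ∀ a (d : Dsub),
      φ a d = (ContinuousLinearMap.adjoint V) (π a ⟨V (d : H), hVD d⟩))
    (hmin : ∀ ℓ, F ℓ = minSp E Dp π V ℓ)
    (T : Hp →L[ℂ] Hp)
    (hTinv : ∀ ℓ (x : Hp), x ∈ F ℓ → T x ∈ F ℓ)
    (hTperp : ∀ ℓ (x : Hp), x ∈ (F ℓ)ᗮ → T x ∈ (F ℓ)ᗮ)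
    (hTcomm : ∀ a (d d' : Dp), (d' : Hp) = T ((d : Hp)) → T (π a d) = π a d')
    (hzero : ∀ a (d : Dsub),
      (ContinuousLinearMap.adjoint V) (T (π a ⟨V (d : H), hVD d⟩)) = 0) :
    T = 0 :=
  stmt12_general E Dsub hD F Dp hDp hDpd π hπD hπmul hπstar V hVD hmin T hTinv hTcomm hzero
end

section
/- Let {H; E; D} and {K; F; O} be quantized domains over the same index set Ω, and let C*_{E,F}(D,O) be the set of linear operators T : D → O with T(H_ℓ) ⊆ K_ℓ, T(H_ℓ^⊥ ∩ D) ⊆ K_ℓ^⊥ ∩ O, and T|_{H_ℓ} bounded for all ℓ. Then C*_{E,F}(D,O), with right action (T,S) ↦ TS of C*_E(D) and inner product ⟨T,S⟩ = T*S, is a Hilbert module over the locally C*-algebra C*_E(D), complete with respect to the seminorms q_ℓ(T) = ‖T|_{H_ℓ}‖. -/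
open scoped ComplexOrder

/-- An element of `C*_{E,F}(D,O)`: a linear operator `T : D → O` with `T(Hℓ) ⊆ Kℓ`,
`T(Hℓ^⊥ ∩ D) ⊆ Kℓ^⊥ ∩ O`, and `T|_{Hℓ}` bounded for every `ℓ`. -/
structure HomOp {Ω : Type*}
    {H : Type*} [NormedAddCommGroup H] [InnerProductSpace ℂ H]
    {K : Type*} [NormedAddCommGroup K] [InnerProductSpace ℂ K]
    (E : Ω → Submodule ℂ H) (Dsub : Submodule ℂ H)
    (F : Ω → Submodule ℂ K) (Osub : Submodule ℂ K) where
  toFun : Dsub →ₗ[ℂ] K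
  memO : ∀ d : Dsub, toFun d ∈ Osub
  inv : ∀ (ℓ : Ω) (d : Dsub), (d : H) ∈ E ℓ → toFun d ∈ F ℓ
  perp : ∀ (ℓ : Ω) (d : Dsub), (d : H) ∈ (E ℓ)ᗮ → toFun d ∈ (F ℓ)ᗮ
  bdd : ∀ ℓ : Ω, ∃ C : ℝ, 0 ≤ C ∧ ∀ d : Dsub, (d : H) ∈ E ℓ → ‖toFun d‖ ≤ C * ‖(d : H)‖


/-!
Everything happens one subspace `E ℓ` at a time. Since `T` maps `E ℓ` into `F ℓ` and
`(E ℓ)ᗮ ∩ D` into `(F ℓ)ᗮ`, for `y ∈ F ℓ` the functional `d ↦ ⟪T d, y⟫` only sees the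
`E ℓ`-component of `d`. Hence `T* y` is the Hilbert space adjoint of the bounded operator
`T|_{E ℓ} : E ℓ → K` applied to `y`; it does not depend on the choice of `ℓ`, because a vector
of `D` is determined by its inner products with `D`. The inner product `⟨T, S⟩` is `T* ∘ S`.

For completeness, a sequence that is Cauchy for every `qℓ` converges pointwise on `D = ⋃ ℓ, E ℓ`.
The invariance conditions pass to the limit because `F ℓ` and `(F ℓ)ᗮ` are closed, and the
Cauchy estimates pass to the limit as `qℓ`-convergence, which also bounds the limit on `E ℓ`.
-/

open Filter Topology
open scoped InnerProductSpace InnerProduct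

theorem Submodule.eq_of_forall_inner_eq {𝕜 E : Type*} [RCLike 𝕜] [NormedAddCommGroup E]
    [InnerProductSpace 𝕜 E] {V : Submodule 𝕜 E} {w₁ w₂ : E} (h₁ : w₁ ∈ V) (h₂ : w₂ ∈ V)
    (h : ∀ v ∈ V, ⟪v, w₁⟫_𝕜 = ⟪v, w₂⟫_𝕜) : w₁ = w₂ :=
  sub_eq_zero.1 <| (inner_self_eq_zero (𝕜 := 𝕜)).1 <| by
    rw [inner_sub_right, h _ (sub_mem h₁ h₂), sub_self]

theorem inner_self_nonneg_complex {E : Type*} [NormedAddCommGroup E] [InnerProductSpace ℂ E]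
    (x : E) : 0 ≤ ⟪x, x⟫_ℂ := by
  rw [inner_self_eq_norm_sq_to_K]
  positivity

theorem norm_sub_le_of_tendsto {E : Type*} [SeminormedAddCommGroup E] {u : ℕ → E} {a : E}
    (hu : Tendsto u atTop (𝓝 a)) {N n : ℕ} {c : ℝ}
    (h : ∀ m, N ≤ m → ‖u n - u m‖ ≤ c) : ‖u n - a‖ ≤ c :=
  le_of_tendsto (tendsto_const_nhds.sub hu).norm (eventually_atTop.2 ⟨N, h⟩)

namespace HomOp

variable {Ω : Type*}
  {H : Type*} [NormedAddCommGroup H] [InnerProductSpace ℂ H]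
  {K : Type*} [NormedAddCommGroup K] [InnerProductSpace ℂ K]
  {E : Ω → Submodule ℂ H} {Dsub : Submodule ℂ H}
  {F : Ω → Submodule ℂ K} {Osub : Submodule ℂ K}

instance : Add (HomOp E Dsub F Osub) where
  add T S :=
    { toFun := T.toFun + S.toFun
      memO := fun d => add_mem (T.memO d) (S.memO d)
      inv := fun ℓ d hd => add_mem (T.inv ℓ d hd) (S.inv ℓ d hd)
      perp := fun ℓ d hd => add_mem (T.perp ℓ d hd) (S.perp ℓ d hd)
      bdd := fun ℓ => by
        obtain ⟨C₁, hC₁, hT⟩ := T.bdd ℓ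
        obtain ⟨C₂, hC₂, hS⟩ := S.bdd ℓ
        refine ⟨C₁ + C₂, add_nonneg hC₁ hC₂, fun d hd => ?_⟩
        calc ‖T.toFun d + S.toFun d‖ ≤ ‖T.toFun d‖ + ‖S.toFun d‖ := norm_add_le _ _
          _ ≤ C₁ * ‖(d : H)‖ + C₂ * ‖(d : H)‖ := add_le_add (hT d hd) (hS d hd)
          _ = (C₁ + C₂) * ‖(d : H)‖ := by ring }

instance : SMul ℂ (HomOp E Dsub F Osub) where
  smul c T :=
    { toFun := c • T.toFun
      memO := fun d => Submodule.smul_mem _ c (T.memO d)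
      inv := fun ℓ d hd => Submodule.smul_mem _ c (T.inv ℓ d hd)
      perp := fun ℓ d hd => Submodule.smul_mem _ c (T.perp ℓ d hd)
      bdd := fun ℓ => by
        obtain ⟨C, hC, hT⟩ := T.bdd ℓ
        refine ⟨‖c‖ * C, by positivity, fun d hd => ?_⟩
        calc ‖c • T.toFun d‖ = ‖c‖ * ‖T.toFun d‖ := norm_smul c _
          _ ≤ ‖c‖ * (C * ‖(d : H)‖) := by gcongr; exact hT d hd
          _ = ‖c‖ * C * ‖(d : H)‖ := by ring }

def comp {H₂ : Type*} [NormedAddCommGroup H₂] [InnerProductSpace ℂ H₂]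
    {E₂ : Ω → Submodule ℂ H₂} {D₂ : Submodule ℂ H₂}
    (T : HomOp E₂ D₂ F Osub) (S : HomOp E Dsub E₂ D₂) : HomOp E Dsub F Osub where
  toFun := T.toFun ∘ₗ LinearMap.codRestrict D₂ S.toFun S.memO
  memO _ := T.memO _
  inv ℓ d hd := T.inv ℓ _ (S.inv ℓ d hd)
  perp ℓ d hd := T.perp ℓ _ (S.perp ℓ d hd)
  bdd ℓ := by
    obtain ⟨C₁, hC₁, hT⟩ := T.bdd ℓ
    obtain ⟨C₂, hC₂, hS⟩ := S.bdd ℓ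
    refine ⟨C₁ * C₂, mul_nonneg hC₁ hC₂, fun d hd => ?_⟩
    calc ‖T.toFun ⟨S.toFun d, S.memO d⟩‖ ≤ C₁ * ‖S.toFun d‖ := hT _ (S.inv ℓ d hd)
      _ ≤ C₁ * (C₂ * ‖(d : H)‖) := by gcongr; exact hS d hd
      _ = C₁ * C₂ * ‖(d : H)‖ := by ring

section Adjoint

variable (hED : ∀ ℓ, E ℓ ≤ Dsub)

def restrict (T : HomOp E Dsub F Osub) (ℓ : Ω) : E ℓ →L[ℂ] K :=
  (T.toFun ∘ₗ Submodule.inclusion (hED ℓ)).mkContinuousOfExistsBound <| by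
    obtain ⟨C, -, hC⟩ := T.bdd ℓ
    exact ⟨C, fun x => hC _ x.2⟩

variable [CompleteSpace K] [∀ ℓ, CompleteSpace (E ℓ)]

theorem inner_apply_eq_inner_adjoint_restrict (T : HomOp E Dsub F Osub) {ℓ : Ω} {y : K}
    (hy : y ∈ F ℓ) (d : Dsub) :
    ⟪T.toFun d, y⟫_ℂ = ⟪(d : H), (((T.restrict hED ℓ)†) y : H)⟫_ℂ := by
  obtain ⟨p, hp, q, hq, hdpq⟩ := (E ℓ).exists_add_mem_mem_orthogonal (d : H)
  have hqD : q ∈ Dsub := eq_sub_of_add_eq' hdpq.symm ▸ sub_mem d.2 (hED ℓ hp)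
  have hTd : T.toFun d = T.toFun ⟨p, hED ℓ hp⟩ + T.toFun ⟨q, hqD⟩ := by
    rw [← map_add]; congr; exact Subtype.ext hdpq
  calc ⟪T.toFun d, y⟫_ℂ = ⟪T.restrict hED ℓ ⟨p, hp⟩, y⟫_ℂ := by
        rw [hTd, inner_add_left, Submodule.inner_left_of_mem_orthogonal hy (T.perp ℓ ⟨q, hqD⟩ hq),
          add_zero]
        rfl
    _ = ⟪p, (((T.restrict hED ℓ)†) y : H)⟫_ℂ := by
        rw [← ContinuousLinearMap.adjoint_inner_right, Submodule.coe_inner]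
    _ = ⟪(d : H), (((T.restrict hED ℓ)†) y : H)⟫_ℂ := by
        rw [hdpq, inner_add_left, Submodule.inner_left_of_mem_orthogonal (Submodule.coe_mem _) hq,
          add_zero]

variable (hOF : ∀ y ∈ Osub, ∃ ℓ, y ∈ F ℓ)

noncomputable def adjointFun (T : HomOp E Dsub F Osub) (y : Osub) : H :=
  ((T.restrict hED (hOF y y.2).choose)†) y

theorem inner_apply_eq_inner_adjointFun (T : HomOp E Dsub F Osub) (y : Osub) (d : Dsub) :
    ⟪T.toFun d, y⟫_ℂ = ⟪(d : H), T.adjointFun hED hOF y⟫_ℂ :=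
  T.inner_apply_eq_inner_adjoint_restrict hED (hOF y y.2).choose_spec d

theorem adjointFun_mem (T : HomOp E Dsub F Osub) (y : Osub) : T.adjointFun hED hOF y ∈ Dsub :=
  hED _ (Submodule.coe_mem _)

theorem adjointFun_eq_of_forall_inner (T : HomOp E Dsub F Osub) {y : Osub} {w : H}
    (hw : w ∈ Dsub) (h : ∀ d : Dsub, ⟪T.toFun d, y⟫_ℂ = ⟪(d : H), w⟫_ℂ) :
    T.adjointFun hED hOF y = w :=
  Submodule.eq_of_forall_inner_eq (T.adjointFun_mem hED hOF y) hw fun v hv => by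
    rw [← T.inner_apply_eq_inner_adjointFun hED hOF y ⟨v, hv⟩, h ⟨v, hv⟩]

theorem adjointFun_eq_adjoint_restrict (T : HomOp E Dsub F Osub) {ℓ : Ω} {y : Osub}
    (hy : (y : K) ∈ F ℓ) : T.adjointFun hED hOF y = ((T.restrict hED ℓ)†) y :=
  T.adjointFun_eq_of_forall_inner hED hOF (hED ℓ (Submodule.coe_mem _))
    (T.inner_apply_eq_inner_adjoint_restrict hED hy)

noncomputable def adjoint (T : HomOp E Dsub F Osub) : HomOp F Osub E Dsub where
  toFun :=
    { toFun := T.adjointFun hED hOF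
      map_add' a b := by
        refine T.adjointFun_eq_of_forall_inner hED hOF
          (add_mem (T.adjointFun_mem hED hOF a) (T.adjointFun_mem hED hOF b)) fun d => ?_
        rw [Submodule.coe_add, inner_add_right, inner_add_right,
          T.inner_apply_eq_inner_adjointFun hED hOF, T.inner_apply_eq_inner_adjointFun hED hOF]
      map_smul' c a := by
        refine T.adjointFun_eq_of_forall_inner hED hOF
          (Submodule.smul_mem _ c (T.adjointFun_mem hED hOF a)) fun d => ?_
        rw [Submodule.coe_smul, inner_smul_right, inner_smul_right,
          T.inner_apply_eq_inner_adjointFun hED hOF, RingHom.id_apply] }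
  memO := T.adjointFun_mem hED hOF
  inv ℓ y hy := by
    simp only [LinearMap.coe_mk, AddHom.coe_mk, T.adjointFun_eq_adjoint_restrict hED hOF hy]
    exact Submodule.coe_mem _
  perp ℓ y hy := (Submodule.mem_orthogonal _ _).2 fun u hu => by
    simp only [LinearMap.coe_mk, AddHom.coe_mk]
    rw [← T.inner_apply_eq_inner_adjointFun hED hOF y ⟨u, hED ℓ hu⟩]
    exact Submodule.inner_right_of_mem_orthogonal (T.inv ℓ _ hu) hy
  bdd ℓ := ⟨‖T.restrict hED ℓ‖, (T.restrict hED ℓ).opNorm_nonneg, fun y hy => by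
    simp only [LinearMap.coe_mk, AddHom.coe_mk, T.adjointFun_eq_adjoint_restrict hED hOF hy]
    simpa using ((T.restrict hED ℓ)†).le_opNorm y⟩

theorem inner_apply_eq_inner_adjoint_comp (T S : HomOp E Dsub F Osub) (d d' : Dsub) :
    ⟪T.toFun d, S.toFun d'⟫_ℂ = ⟪(d : H), ((T.adjoint hED hOF).comp S).toFun d'⟫_ℂ :=
  T.inner_apply_eq_inner_adjointFun hED hOF ⟨_, S.memO d'⟩ d

end Adjoint

theorem cauchySeq_apply (hDE : ∀ x ∈ Dsub, ∃ ℓ, x ∈ E ℓ) {T : ℕ → HomOp E Dsub F Osub}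
    (hT : ∀ (ℓ : Ω) (ε : ℝ), 0 < ε → ∃ N : ℕ, ∀ m n : ℕ, N ≤ m → N ≤ n →
      ∀ d : Dsub, (d : H) ∈ E ℓ → ‖(T m).toFun d - (T n).toFun d‖ ≤ ε * ‖(d : H)‖)
    (d : Dsub) : CauchySeq fun n => (T n).toFun d := by
  obtain ⟨ℓ, hℓ⟩ := hDE d d.2
  refine Metric.cauchySeq_iff.2 fun ε hε => ?_
  obtain ⟨N, hN⟩ := hT ℓ (ε / (‖(d : H)‖ + 1)) (by positivity)
  refine ⟨N, fun m hm n hn => ?_⟩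
  calc dist ((T m).toFun d) ((T n).toFun d) ≤ ε / (‖(d : H)‖ + 1) * ‖(d : H)‖ := by
        rw [dist_eq_norm]; exact hN m n hm hn d hℓ
    _ < ε := by
        rw [div_mul_eq_mul_div, div_lt_iff₀ (by positivity)]
        linarith

theorem exists_tendsto_of_cauchy [CompleteSpace K] (hFc : ∀ ℓ, IsClosed (F ℓ : Set K))
    (hDE : ∀ x ∈ Dsub, ∃ ℓ, x ∈ E ℓ) (hFO : ∀ ℓ, F ℓ ≤ Osub) (T : ℕ → HomOp E Dsub F Osub)
    (hT : ∀ (ℓ : Ω) (ε : ℝ), 0 < ε → ∃ N : ℕ, ∀ m n : ℕ, N ≤ m → N ≤ n →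
      ∀ d : Dsub, (d : H) ∈ E ℓ → ‖(T m).toFun d - (T n).toFun d‖ ≤ ε * ‖(d : H)‖) :
    ∃ L : HomOp E Dsub F Osub, ∀ (ℓ : Ω) (ε : ℝ), 0 < ε → ∃ N : ℕ, ∀ n : ℕ, N ≤ n →
      ∀ d : Dsub, (d : H) ∈ E ℓ → ‖(T n).toFun d - L.toFun d‖ ≤ ε * ‖(d : H)‖ := by
  choose f hf using fun d => cauchySeq_tendsto_of_complete (cauchySeq_apply hDE hT d)
  let L : Dsub →ₗ[ℂ] K := linearMapOfTendsto f (fun n => (T n).toFun) (tendsto_pi_nhds.2 hf)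
  have hL : ∀ d, Tendsto (fun n => (T n).toFun d) atTop (𝓝 (L d)) := hf
  have happrox : ∀ (ℓ : Ω) (ε : ℝ), 0 < ε → ∃ N : ℕ, ∀ n : ℕ, N ≤ n →
      ∀ d : Dsub, (d : H) ∈ E ℓ → ‖(T n).toFun d - L d‖ ≤ ε * ‖(d : H)‖ := by
    intro ℓ ε hε
    obtain ⟨N, hN⟩ := hT ℓ ε hε
    exact ⟨N, fun n hn d hd => norm_sub_le_of_tendsto (hL d) fun m hm => hN n m hn hm d hd⟩
  have hinv : ∀ ℓ (d : Dsub), (d : H) ∈ E ℓ → L d ∈ F ℓ := fun ℓ d hd =>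
    (hFc ℓ).mem_of_tendsto (hL d) (Eventually.of_forall fun n => (T n).inv ℓ d hd)
  refine ⟨⟨L, fun d => ?_, hinv, fun ℓ d hd => ?_, fun ℓ => ?_⟩, happrox⟩
  · obtain ⟨ℓ, hℓ⟩ := hDE d d.2
    exact hFO ℓ (hinv ℓ d hℓ)
  · exact (F ℓ).isClosed_orthogonal.mem_of_tendsto (hL d)
      (Eventually.of_forall fun n => (T n).perp ℓ d hd)
  · obtain ⟨N, hN⟩ := happrox ℓ 1 one_pos
    obtain ⟨C, hC, hTN⟩ := (T N).bdd ℓ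
    refine ⟨C + 1, by positivity, fun d hd => ?_⟩
    calc ‖L d‖ ≤ ‖(T N).toFun d‖ + ‖(T N).toFun d - L d‖ := norm_le_norm_add_norm_sub _ _
      _ ≤ C * ‖(d : H)‖ + 1 * ‖(d : H)‖ := add_le_add (hTN d hd) (hN N le_rfl d hd)
      _ = (C + 1) * ‖(d : H)‖ := by ring

end HomOp

theorem stmt16_general
    {Ω : Type*}
    {H : Type*} [NormedAddCommGroup H] [InnerProductSpace ℂ H] [CompleteSpace H]
    {K : Type*} [NormedAddCommGroup K] [InnerProductSpace ℂ K] [CompleteSpace K]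
    (E : Ω → Submodule ℂ H)
    (hEc : ∀ ℓ, IsClosed (E ℓ : Set H))
    (Dsub : Submodule ℂ H)
    (hD : ∀ x : H, x ∈ Dsub ↔ ∃ ℓ, x ∈ E ℓ)
    (F : Ω → Submodule ℂ K)
    (hFc : ∀ ℓ, IsClosed (F ℓ : Set K))
    (Osub : Submodule ℂ K)
    (hO : ∀ x : K, x ∈ Osub ↔ ∃ ℓ, x ∈ F ℓ) :
    -- closed under addition and scalar multiplication:
    (∀ T S : HomOp E Dsub F Osub, ∃ W : HomOp E Dsub F Osub,
      ∀ d : Dsub, W.toFun d = T.toFun d + S.toFun d) ∧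
    (∀ (c : ℂ) (T : HomOp E Dsub F Osub), ∃ W : HomOp E Dsub F Osub,
      ∀ d : Dsub, W.toFun d = c • T.toFun d) ∧
    -- right `C*_E(D)`-module action `(T, S) ↦ T ∘ S`:
    (∀ (T : HomOp E Dsub F Osub) (S : HomOp E Dsub E Dsub),
      ∃ W : HomOp E Dsub F Osub,
        ∀ d : Dsub, W.toFun d = T.toFun ⟨S.toFun d, S.memO d⟩) ∧
    -- `C*_E(D)`-valued inner product `⟨T,S⟩ = T*S`:
    (∀ T S : HomOp E Dsub F Osub, ∃ IP : HomOp E Dsub E Dsub,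
      ∀ d d' : Dsub, (inner ℂ (T.toFun d) (S.toFun d') : ℂ) = inner ℂ ((d : H)) (IP.toFun d')) ∧
    -- `⟨T,T⟩ ≥ 0`, with definiteness:
    (∀ (T : HomOp E Dsub F Osub) (IP : HomOp E Dsub E Dsub),
      (∀ d d' : Dsub, (inner ℂ (T.toFun d) (T.toFun d') : ℂ) = inner ℂ ((d : H)) (IP.toFun d')) →
      (∀ d : Dsub, 0 ≤ (inner ℂ ((d : H)) (IP.toFun d) : ℂ)) ∧
      ((∀ d : Dsub, IP.toFun d = 0) → ∀ d : Dsub, T.toFun d = 0)) ∧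
    -- completeness for the seminorms `qℓ`:
    (∀ T : ℕ → HomOp E Dsub F Osub,
      (∀ (ℓ : Ω) (ε : ℝ), 0 < ε → ∃ N : ℕ, ∀ m n : ℕ, N ≤ m → N ≤ n →
        ∀ d : Dsub, (d : H) ∈ E ℓ → ‖(T m).toFun d - (T n).toFun d‖ ≤ ε * ‖(d : H)‖) →
      ∃ L : HomOp E Dsub F Osub, ∀ (ℓ : Ω) (ε : ℝ), 0 < ε → ∃ N : ℕ, ∀ n : ℕ, N ≤ n →
        ∀ d : Dsub, (d : H) ∈ E ℓ → ‖(T n).toFun d - L.toFun d‖ ≤ ε * ‖(d : H)‖) := by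
  have : ∀ ℓ, CompleteSpace (E ℓ) := fun ℓ => (hEc ℓ).completeSpace_coe
  have hED : ∀ ℓ, E ℓ ≤ Dsub := fun ℓ x hx => (hD x).2 ⟨ℓ, hx⟩
  have hOF : ∀ y ∈ Osub, ∃ ℓ, y ∈ F ℓ := fun y => (hO y).1
  refine ⟨fun T S => ⟨T + S, fun _ => rfl⟩, fun c T => ⟨c • T, fun _ => rfl⟩,
    fun T S => ⟨T.comp S, fun _ => rfl⟩,
    fun T S => ⟨(T.adjoint hED hOF).comp S, T.inner_apply_eq_inner_adjoint_comp hED hOF S⟩,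
    fun T IP hIP => ⟨fun d => hIP d d ▸ inner_self_nonneg_complex _, fun hIP0 d => ?_⟩,
    HomOp.exists_tendsto_of_cauchy hFc (fun x => (hD x).1) (fun ℓ y hy => (hO y).2 ⟨ℓ, hy⟩)⟩
  exact inner_self_eq_zero.1 (by rw [hIP d d, hIP0 d, inner_zero_right])

/-- `C*_{E,F}(D,O)` with the right action `(T,S) ↦ T∘S` of `C*_E(D)` and
the inner product `⟨T,S⟩ = T*S` is a Hilbert module over the locally C*-algebra
`C*_E(D)`, complete with respect to the seminorms `qℓ(T) = ‖T|_{Hℓ}‖`. -/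
theorem stmt16
    {Ω : Type*} [Preorder Ω] [IsDirected Ω (· ≤ ·)] [Nonempty Ω]
    {H : Type*} [NormedAddCommGroup H] [InnerProductSpace ℂ H] [CompleteSpace H]
    {K : Type*} [NormedAddCommGroup K] [InnerProductSpace ℂ K] [CompleteSpace K]
    (E : Ω → Submodule ℂ H)
    (hEc : ∀ ℓ, IsClosed (E ℓ : Set H)) (hEm : Monotone E)
    (Dsub : Submodule ℂ H)
    (hD : ∀ x : H, x ∈ Dsub ↔ ∃ ℓ, x ∈ E ℓ)
    (hDd : Dense (Dsub : Set H))
    (F : Ω → Submodule ℂ K)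
    (hFc : ∀ ℓ, IsClosed (F ℓ : Set K)) (hFm : Monotone F)
    (Osub : Submodule ℂ K)
    (hO : ∀ x : K, x ∈ Osub ↔ ∃ ℓ, x ∈ F ℓ)
    (hOd : Dense (Osub : Set K)) :
    -- closed under addition and scalar multiplication:
    (∀ T S : HomOp E Dsub F Osub, ∃ W : HomOp E Dsub F Osub,
      ∀ d : Dsub, W.toFun d = T.toFun d + S.toFun d) ∧
    (∀ (c : ℂ) (T : HomOp E Dsub F Osub), ∃ W : HomOp E Dsub F Osub,
      ∀ d : Dsub, W.toFun d = c • T.toFun d) ∧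
    -- right `C*_E(D)`-module action `(T, S) ↦ T ∘ S`:
    (∀ (T : HomOp E Dsub F Osub) (S : HomOp E Dsub E Dsub),
      ∃ W : HomOp E Dsub F Osub,
        ∀ d : Dsub, W.toFun d = T.toFun ⟨S.toFun d, S.memO d⟩) ∧
    -- `C*_E(D)`-valued inner product `⟨T,S⟩ = T*S`:
    (∀ T S : HomOp E Dsub F Osub, ∃ IP : HomOp E Dsub E Dsub,
      ∀ d d' : Dsub, (inner ℂ (T.toFun d) (S.toFun d') : ℂ) = inner ℂ ((d : H)) (IP.toFun d')) ∧
    -- `⟨T,T⟩ ≥ 0`, with definiteness: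
    (∀ (T : HomOp E Dsub F Osub) (IP : HomOp E Dsub E Dsub),
      (∀ d d' : Dsub, (inner ℂ (T.toFun d) (T.toFun d') : ℂ) = inner ℂ ((d : H)) (IP.toFun d')) →
      (∀ d : Dsub, 0 ≤ (inner ℂ ((d : H)) (IP.toFun d) : ℂ)) ∧
      ((∀ d : Dsub, IP.toFun d = 0) → ∀ d : Dsub, T.toFun d = 0)) ∧
    -- completeness for the seminorms `qℓ`:
    (∀ T : ℕ → HomOp E Dsub F Osub,
      (∀ (ℓ : Ω) (ε : ℝ), 0 < ε → ∃ N : ℕ, ∀ m n : ℕ, N ≤ m → N ≤ n →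
        ∀ d : Dsub, (d : H) ∈ E ℓ → ‖(T m).toFun d - (T n).toFun d‖ ≤ ε * ‖(d : H)‖) →
      ∃ L : HomOp E Dsub F Osub, ∀ (ℓ : Ω) (ε : ℝ), 0 < ε → ∃ N : ℕ, ∀ n : ℕ, N ≤ n →
        ∀ d : Dsub, (d : H) ∈ E ℓ → ‖(T n).toFun d - L.toFun d‖ ≤ ε * ‖(d : H)‖) :=
  stmt16_general E hEc Dsub hD F hFc Osub hO
end
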